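/- arXiv:1610.09837 — 8 statements merged into one kernel-verified Lean document; each statement's English description precedes it below -/
import Mathlib

section
/- For every integer k ≥ 1, the following identity of natural numbers holds: ∑_{i=1}^{k} C(2i,i) + ∑_{i=0}^{k} 2^i + ∑_{i=1}^{k-1} ∑_{j=i}^{k} C(k+i,j) = C(2k+2,k+1) − 1 + ∑_{i=1}^{k-1} C(2i,i). (This is the count of series involved in the system S_0 of Proposition 3.1: it equals f(k) := C(2k+2,k+1) − 1 + ∑_{i=1}^{k-1} C(2i,i).) -/
/-!
Adding the two boundary rows `i = 0` (contributing `2 ^ k`) and `i = k` (contributing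
`C(2k, k)`) to the double sum, the claim becomes
`∑_{i=0}^{k} ∑_{j=i}^{k} C(k+i, j) + 2 ^ k = C(2k+2, k+1)`. Summing by columns instead of rows,
the hockey-stick identity gives `∑_{i=0}^{j} C(k+i, j) = C(k+j+1, j+1) - C(k, j+1)`; the first
terms sum, by the hockey stick along a diagonal, to `C(2k+2, k+1) - 1`, the second ones to
`2 ^ k - 1`.
-/

open Finset

theorem sum_range_add_choose_add_choose_succ (k j n : ℕ) :
    ∑ i ∈ range n, (k + i).choose j + k.choose (j + 1) = (k + n).choose (j + 1) := by
  induction n with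
  | zero => simp
  | succ n ih =>
    rw [sum_range_succ, add_right_comm, ih, ← add_assoc, Nat.choose_succ_succ', add_comm]

theorem sum_range_choose_succ_add_one (k : ℕ) :
    ∑ j ∈ range (k + 1), k.choose (j + 1) + 1 = 2 ^ k := by
  have h := sum_range_succ' (fun j => k.choose j) (k + 1)
  rw [sum_range_succ, Nat.sum_range_choose, Nat.choose_succ_self, add_zero,
    Nat.choose_zero_right] at h
  exact h.symm

theorem sum_range_add_succ_choose_succ_add_one (k : ℕ) :
    ∑ j ∈ range (k + 1), (k + (j + 1)).choose (j + 1) + 1 = (2 * k + 2).choose (k + 1) := by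
  have h := sum_range_succ' (fun j => (k + j).choose j) (k + 1)
  simp only [add_zero, Nat.choose_zero_right] at h
  rw [← h]
  simp_rw [← Nat.choose_symm_add, add_comm k]
  rw [Nat.sum_range_add_choose]
  ring_nf

theorem sum_Icc_sum_Icc_choose_add_two_pow (k : ℕ) :
    ∑ i ∈ Icc 0 k, ∑ j ∈ Icc i k, (k + i).choose j + 2 ^ k = (2 * k + 2).choose (k + 1) := by
  have by_columns : ∑ i ∈ Icc 0 k, ∑ j ∈ Icc i k, (k + i).choose j
      = ∑ j ∈ range (k + 1), ∑ i ∈ range (j + 1), (k + i).choose j := by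
    simp only [← Ico_add_one_right_eq_Icc, range_eq_Ico]
    exact sum_Ico_Ico_comm 0 (k + 1) _
  have columns : ∑ j ∈ range (k + 1), ∑ i ∈ range (j + 1), (k + i).choose j
      + ∑ j ∈ range (k + 1), k.choose (j + 1)
      = ∑ j ∈ range (k + 1), (k + (j + 1)).choose (j + 1) := by
    rw [← sum_add_distrib]
    exact sum_congr rfl fun j _ => sum_range_add_choose_add_choose_succ k j (j + 1)
  have row := sum_range_choose_succ_add_one k
  have diagonal := sum_range_add_succ_choose_succ_add_one k
  omega

theorem sum_Icc_zero_two_pow_add_one (n : ℕ) : ∑ i ∈ Icc 0 n, 2 ^ i + 1 = 2 ^ (n + 1) := by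
  rw [← Nat.range_succ_eq_Icc_zero, Nat.geomSum_eq le_rfl]
  simpa using Nat.sub_add_cancel Nat.one_le_two_pow

theorem sum_count_eq_f_general (k : ℕ) :
    (∑ i ∈ Finset.Icc 1 k, Nat.choose (2 * i) i)
      + (∑ i ∈ Finset.Icc 0 k, 2 ^ i)
      + (∑ i ∈ Finset.Icc 1 (k - 1), ∑ j ∈ Finset.Icc i k, Nat.choose (k + i) j)
    = Nat.choose (2 * k + 2) (k + 1) - 1
      + ∑ i ∈ Finset.Icc 1 (k - 1), Nat.choose (2 * i) i := by
  rcases k with _ | m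
  · decide
  have split_ends : ∀ f : ℕ → ℕ,
      ∑ i ∈ Icc 0 (m + 1), f i = f 0 + ∑ i ∈ Icc 1 m, f i + f (m + 1) := fun f => by
    rw [sum_Icc_succ_top (Nat.zero_le _), ← add_sum_Ioc_eq_sum_Icc (Nat.zero_le _),
      ← Icc_add_one_left_eq_Ioc, zero_add]
  have rows := sum_Icc_sum_Icc_choose_add_two_pow (m + 1)
  rw [split_ends, add_zero, ← Nat.range_succ_eq_Icc_zero, Nat.sum_range_choose, Icc_self,
    sum_singleton, ← two_mul] at rows
  have geom := sum_Icc_zero_two_pow_add_one (m + 1)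
  have central_pos := Nat.choose_pos (by omega : m + 1 + 1 ≤ 2 * (m + 1) + 2)
  rw [sum_Icc_succ_top (by omega), Nat.add_sub_cancel]
  omega

/-- Proposition 3.1 of Bonichon, Bousquet-Mélou, Dorbec, Pennarun,
"On the number of planar Eulerian orientations": counting the series
in the system `S₀` gives
`f(k) = C(2k+2, k+1) - 1 + ∑_{i=1}^{k-1} C(2i, i)`. -/
theorem sum_count_eq_f (k : ℕ) (hk : 1 ≤ k) :
    (∑ i ∈ Finset.Icc 1 k, Nat.choose (2 * i) i)
      + (∑ i ∈ Finset.Icc 0 k, 2 ^ i)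
      + (∑ i ∈ Finset.Icc 1 (k - 1), ∑ j ∈ Finset.Icc i k, Nat.choose (k + i) j)
    = Nat.choose (2 * k + 2) (k + 1) - 1
      + ∑ i ∈ Finset.Icc 1 (k - 1), Nat.choose (2 * i) i :=
  sum_count_eq_f_general k
end

section
/- For every integer k ≥ 1, (k+1)·∑_{i=1}^{k-1} ∑_{j=i}^{k} C(k+i,j) + (k+1)·2^{k+1} = (3k+1)·C(2k,k). Equivalently, ∑_{i=1}^{k-1} ∑_{j=i}^{k} C(k+i,j) = (3k+1)/(k+1)·C(2k,k) − 2^{k+1}. -/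
/-!
Write `S i = ∑_{j=i}^{k} C(k+i, j)` for the middle part of row `k + i` of Pascal's triangle.
Pascal's rule gives the recursion `S (i+1) = 2 S i - 2 C(k+i, k)`, which telescopes over
`0 ≤ i < k` to `∑_{i<k} S i + S 0 = S k + 2 ∑_{i<k} C(k+i, k)`. Here `S 0 = 2^k`,
`S k = C(2k, k)`, and the hockey-stick identity sums the last term to `C(2k, k+1)`, so that the
double sum plus `2^{k+1}` is `C(2k, k) + 2 C(2k, k+1)`; finally `(k+1) C(2k, k+1) = k C(2k, k)`.
-/

open Finset

theorem sum_range_add_eq_add_sum_range_of_succ_add_eq_two_nsmul {M : Type*} [AddCommMonoid M]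
    {f g : ℕ → M} {m : ℕ} (h : ∀ i < m, f (i + 1) + g i = 2 • f i) :
    ∑ i ∈ range m, f i + f 0 = f m + ∑ i ∈ range m, g i := by
  induction m with
  | zero => simp
  | succ m ih =>
    rw [sum_range_succ, sum_range_succ, add_right_comm, ih fun i hi => h i (by omega),
      add_right_comm, ← two_nsmul, ← h m (by omega)]
    abel

theorem Nat.sum_Icc_choose_succ_add_choose_add_choose {n a b : ℕ} (hab : a ≤ b) :
    ∑ j ∈ Icc (a + 1) b, (n + 1).choose j + n.choose a + n.choose b
      = 2 * ∑ j ∈ Icc a b, n.choose j := by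
  induction b, hab using Nat.le_induction with
  | base => simp [two_mul]
  | succ b hab ih =>
    rw [sum_Icc_succ_top (by omega), sum_Icc_succ_top (by omega), Nat.choose_succ_succ']
    omega

theorem Nat.sum_range_add_choose_self (k : ℕ) :
    ∑ i ∈ range k, (k + i).choose k = (2 * k).choose (k + 1) := by
  cases k with
  | zero => rfl
  | succ n =>
    simp_rw [add_comm (n + 1)]
    rw [Nat.sum_range_add_choose]
    ring_nf

/-- For every integer `k ≥ 1`,
`(k+1) · ∑_{i=1}^{k-1} ∑_{j=i}^{k} C(k+i, j) + (k+1) · 2^{k+1} = (3k+1) · C(2k, k)`. -/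
theorem sum_valid_words_eval (k : ℕ) (hk : 1 ≤ k) :
    (k + 1) * (∑ i ∈ Finset.Icc 1 (k - 1), ∑ j ∈ Finset.Icc i k, Nat.choose (k + i) j)
      + (k + 1) * 2 ^ (k + 1)
    = (3 * k + 1) * Nat.choose (2 * k) k := by
  set S : ℕ → ℕ := fun i => ∑ j ∈ Icc i k, (k + i).choose j with hS
  have step : ∀ i < k, S (i + 1) + 2 * (k + i).choose k = 2 * S i := by
    intro i hi
    have pascal := Nat.sum_Icc_choose_succ_add_choose_add_choose (n := k + i) hi.le
    rw [← Nat.choose_symm_add] at pascal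
    simp only [hS, ← add_assoc]
    omega
  have telescoped := sum_range_add_eq_add_sum_range_of_succ_add_eq_two_nsmul step
  have S_zero : S 0 = 2 ^ k := by
    simp [hS, ← Nat.range_succ_eq_Icc_zero, Nat.sum_range_choose]
  have S_self : S k = (2 * k).choose k := by simp [hS, two_mul]
  have sum_S : ∑ i ∈ range k, S i = S 0 + ∑ i ∈ Icc 1 (k - 1), S i := by
    obtain ⟨n, rfl⟩ := Nat.exists_eq_add_of_le' hk
    rw [Nat.range_succ_eq_Icc_zero, ← add_sum_Ioc_eq_sum_Icc n.zero_le,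
      ← Icc_add_one_left_eq_Ioc, zero_add, Nat.add_sub_cancel]
  have choose_succ : (2 * k).choose (k + 1) * (k + 1) = (2 * k).choose k * k := by
    rw [Nat.choose_succ_right_eq]; congr; omega
  rw [← mul_sum, Nat.sum_range_add_choose_self, sum_S, S_zero, S_self] at telescoped
  have key : ∑ i ∈ Icc 1 (k - 1), S i + 2 ^ (k + 1)
      = (2 * k).choose k + 2 * (2 * k).choose (k + 1) := by
    rw [pow_succ]; omega
  calc (k + 1) * ∑ i ∈ Icc 1 (k - 1), S i + (k + 1) * 2 ^ (k + 1)
      = (k + 1) * ((2 * k).choose k + 2 * (2 * k).choose (k + 1)) := by rw [← key, mul_add]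
    _ = (3 * k + 1) * (2 * k).choose k := by linear_combination 2 * choose_succ
end

section
/- For every integer k ≥ 1, ∑_{j=1}^{k-1} ∑_{i=1}^{j} C(k+i,j) + 2^{k+1} = 1 + C(2k+1,k). -/
/-!
By the hockey-stick identity each inner sum is `C(k+j+1, j+1) - C(k+1, j+1)`. Summed over `j`,
the first terms form another hockey-stick sum, equal to `C(2k+1, k) - (k+2)`, and the second
terms are a row of Pascal's triangle without its first two and last entries, `2^(k+1) - (k+3)`.
-/

open Finset

theorem sum_Icc_one_choose_add_add_choose (m j r : ℕ) :
    ∑ i ∈ Icc 1 r, (m + i).choose j + (m + 1).choose (j + 1) = (m + r + 1).choose (j + 1) := by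
  induction r with
  | zero => simp
  | succ r ih =>
    rw [sum_Icc_succ_top (by omega), add_right_comm, ih, Nat.choose_succ_succ (m + (r + 1)),
      ← add_assoc, add_comm ((m + r + 1).choose j)]

theorem sum_Icc_one_choose_succ_add (m r : ℕ) :
    ∑ j ∈ Icc 1 r, m.choose (j + 1) + (m + 1) = ∑ t ∈ range (r + 2), m.choose t := by
  induction r with
  | zero => simp [sum_range_succ, add_comm]
  | succ r ih => rw [sum_Icc_succ_top (by omega), add_right_comm, ih, sum_range_succ _ (r + 2)]

theorem sum_binomial_identity_general (k : ℕ) :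
    (∑ j ∈ Finset.Icc 1 (k - 1), ∑ i ∈ Finset.Icc 1 j, Nat.choose (k + i) j) + 2 ^ (k + 1)
    = 1 + Nat.choose (2 * k + 1) k := by
  obtain _ | n := k
  · rfl
  have inner : ∑ j ∈ Icc 1 n, ∑ i ∈ Icc 1 j, (n + 1 + i).choose j
      + ∑ j ∈ Icc 1 n, (n + 2).choose (j + 1) = ∑ j ∈ Icc 1 n, (n + 2 + j).choose (n + 1) := by
    rw [← sum_add_distrib]
    refine sum_congr rfl fun j _ => ?_
    rw [sum_Icc_one_choose_add_add_choose, show n + 1 + j + 1 = (j + 1) + (n + 1) by omega,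
      Nat.choose_symm_add]
    ring_nf
  have outer := sum_Icc_one_choose_add_add_choose (n + 2) (n + 1) n
  rw [Nat.choose_succ_self_right, show n + 2 + n + 1 = (n + 2) + (n + 1) by omega,
    Nat.choose_symm_add] at outer
  have row := sum_Icc_one_choose_succ_add (n + 2) n
  have full_row := Nat.sum_range_choose (n + 2)
  rw [sum_range_succ, Nat.choose_self] at full_row
  rw [Nat.add_sub_cancel, show 2 * (n + 1) + 1 = n + 2 + (n + 1) by ring]
  linarith

/-- For every integer `k ≥ 1`,
`∑_{j=1}^{k-1} ∑_{i=1}^{j} C(k+i, j) + 2^{k+1} = 1 + C(2k+1, k)`. -/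
theorem sum_binomial_identity (k : ℕ) (hk : 1 ≤ k) :
    (∑ j ∈ Finset.Icc 1 (k - 1), ∑ i ∈ Finset.Icc 1 j, Nat.choose (k + i) j) + 2 ^ (k + 1)
    = 1 + Nat.choose (2 * k + 1) k :=
  sum_binomial_identity_general k
end

section
/- Let o : ℕ → ℝ and, for each k ∈ ℕ, let a_k : ℕ → ℝ be sequences satisfying: (i) 1 ≤ a_k(n) ≤ o(n) ≤ C^n for all k ≥ 1 and n ≥ 1, for some constant C > 0; (ii) each a_k is super-multiplicative, i.e. a_k(m+n) ≥ a_k(m)·a_k(n) for all m,n ≥ 1; (iii) o is super-multiplicative, i.e. o(m+n) ≥ o(m)·o(n) for all m,n ≥ 1; (iv) a_k(n) ≤ a_{k+1}(n) for all k,n; (v) for every n ≥ 1 there exists k with a_k(n) = o(n). Then for each k the limit λ_k := lim_{n→∞} a_k(n)^{1/n} exists and equals sup_{n≥1} a_k(n)^{1/n}; likewise μ := lim_{n→∞} o(n)^{1/n} exists and equals sup_{n≥1} o(n)^{1/n}; the sequence (λ_k) is non-decreasing, λ_k ≤ μ for all k, and λ_k converges to μ as k → ∞ (equivalently sup_k λ_k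 = μ). -/
open Filter Set Real


/-- Fekete's lemma, sup form, for super-multiplicative sequences. -/
lemma fekete_sup (f : ℕ → ℝ) (C : ℝ) (hC : 0 < C)
    (h1 : ∀ n, 1 ≤ n → 1 ≤ f n) (hCb : ∀ n, 1 ≤ n → f n ≤ C ^ n)
    (hsup : ∀ m n, 1 ≤ m → 1 ≤ n → f m * f n ≤ f (m + n)) :
    ∃ L, Tendsto (fun n : ℕ => f n ^ (1 / (n : ℝ))) atTop (nhds L) ∧
      IsLUB {x : ℝ | ∃ n : ℕ, 1 ≤ n ∧ x = f n ^ (1 / (n : ℝ))} L := by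
  classical
  set u : ℕ → ℝ := fun n => if n = 0 then 0 else -Real.log (f n) with hu
  have hfpos : ∀ n, 1 ≤ n → 0 < f n := fun n hn => lt_of_lt_of_le one_pos (h1 n hn)
  have hsub : Subadditive u := by
    intro m n
    rcases Nat.eq_zero_or_pos m with hm | hm
    · subst hm; simp [hu]
    rcases Nat.eq_zero_or_pos n with hn | hn
    · subst hn; simp [hu]
    have hmn : m + n ≠ 0 := by omega
    simp only [hu, if_neg (Nat.pos_iff_ne_zero.mp hm), if_neg (Nat.pos_iff_ne_zero.mp hn),
      if_neg hmn]
    have : Real.log (f m) + Real.log (f n) ≤ Real.log (f (m + n)) := by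
      rw [← Real.log_mul (hfpos m hm).ne' (hfpos n hn).ne']
      exact Real.log_le_log (mul_pos (hfpos m hm) (hfpos n hn)) (hsup m n hm hn)
    linarith
  have heq : ∀ n : ℕ, 1 ≤ n → f n ^ (1 / (n : ℝ)) = Real.exp (-(u n / n)) := by
    intro n hn
    rw [hu]; simp only [if_neg (Nat.pos_iff_ne_zero.mp hn)]
    rw [Real.rpow_def_of_pos (hfpos n hn), neg_div, neg_neg, mul_one_div]
  have hlow : ∀ n : ℕ, 1 ≤ n → -Real.log C ≤ u n / n := by
    intro n hn
    have hn0 : (0:ℝ) < n := by exact_mod_cast hn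
    have hl : Real.log (f n) ≤ n * Real.log C := by
      calc Real.log (f n) ≤ Real.log (C ^ n) :=
            Real.log_le_log (hfpos n hn) (hCb n hn)
        _ = n * Real.log C := by rw [Real.log_pow]
    rw [hu]; simp only [if_neg (Nat.pos_iff_ne_zero.mp hn)]
    rw [le_div_iff₀ hn0]
    nlinarith
  have hbdd : BddBelow (Set.range fun n : ℕ => u n / n) := by
    refine ⟨min 0 (-Real.log C), ?_⟩
    rintro x ⟨n, rfl⟩
    rcases Nat.eq_zero_or_pos n with hn | hn
    · subst hn; simp [hu]
    · exact le_trans (min_le_right _ _) (hlow n hn)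
  have htends := hsub.tendsto_lim hbdd
  refine ⟨Real.exp (-hsub.lim), ?_, ?_⟩
  · have : Tendsto (fun n : ℕ => Real.exp (-(u n / n))) atTop (nhds (Real.exp (-hsub.lim))) :=
      (Real.continuous_exp.tendsto _).comp (htends.neg)
    refine this.congr' ?_
    filter_upwards [eventually_ge_atTop 1] with n hn
    exact (heq n hn).symm
  · constructor
    · rintro x ⟨n, hn, rfl⟩
      have hle : hsub.lim ≤ u n / n := hsub.lim_le_div hbdd (Nat.pos_iff_ne_zero.mp hn)
      rw [heq n hn]
      exact Real.exp_le_exp.2 (by linarith)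
    · intro b hb
      have hb1 : f 1 ^ (1 / ((1:ℕ) : ℝ)) ≤ b := hb ⟨1, le_rfl, rfl⟩
      have hpos1 : 0 < f 1 ^ (1 / ((1:ℕ) : ℝ)) := by
        rw [heq 1 le_rfl]; exact Real.exp_pos _
      have hbpos : 0 < b := lt_of_lt_of_le hpos1 hb1
      have key : -Real.log b ≤ hsub.lim := by
        rw [Subadditive.lim]
        apply le_csInf
        · exact ⟨_, Set.mem_image_of_mem _ (Set.mem_Ici.2 (le_refl 1))⟩
        · rintro x ⟨n, hn, rfl⟩
          have hn1 : 1 ≤ n := hn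
          have hxb : f n ^ (1 / (n:ℝ)) ≤ b := hb ⟨n, hn1, rfl⟩
          rw [heq n hn1] at hxb
          have := (Real.le_log_iff_exp_le hbpos).2 hxb
          linarith
      calc Real.exp (-hsub.lim) ≤ Real.exp (Real.log b) := Real.exp_le_exp.2 (by linarith)
        _ = b := Real.exp_log hbpos

/-- Abstract form of Proposition 4.1: given super-multiplicative sequences
`a k` (counting subsets of Eulerian orientations) increasing in `k` towards
a super-multiplicative sequence `o` (counting all Eulerian orientations),
all bounded between `1` and `C^n`, the growth rates
`λ_k = lim a_k(n)^{1/n} = sup_{n ≥ 1} a_k(n)^{1/n}` and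
`μ = lim o(n)^{1/n} = sup_{n ≥ 1} o(n)^{1/n}` exist, the `λ_k` are
non-decreasing, bounded above by `μ`, and converge to `μ`. -/
theorem growth_rates_increase_to_mu (o : ℕ → ℝ) (a : ℕ → ℕ → ℝ)
    (C : ℝ) (hC : 0 < C)
    (hbound : ∀ k, 1 ≤ k → ∀ n, 1 ≤ n → 1 ≤ a k n ∧ a k n ≤ o n ∧ o n ≤ C ^ n)
    (hsuper : ∀ k, ∀ m n, 1 ≤ m → 1 ≤ n → a k m * a k n ≤ a k (m + n))
    (hosuper : ∀ m n, 1 ≤ m → 1 ≤ n → o m * o n ≤ o (m + n))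
    (hmono : ∀ k n, a k n ≤ a (k + 1) n)
    (hconv : ∀ n, 1 ≤ n → ∃ k, a k n = o n) :
    ∃ lam : ℕ → ℝ, ∃ mu : ℝ,
      (∀ k, 1 ≤ k →
        Tendsto (fun n : ℕ => (a k n) ^ (1 / (n : ℝ))) atTop (nhds (lam k))) ∧
      (∀ k, 1 ≤ k →
        IsLUB {x : ℝ | ∃ n : ℕ, 1 ≤ n ∧ x = (a k n) ^ (1 / (n : ℝ))} (lam k)) ∧
      Tendsto (fun n : ℕ => (o n) ^ (1 / (n : ℝ))) atTop (nhds mu) ∧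
      IsLUB {x : ℝ | ∃ n : ℕ, 1 ≤ n ∧ x = (o n) ^ (1 / (n : ℝ))} mu ∧
      (∀ k, 1 ≤ k → lam k ≤ lam (k + 1)) ∧
      (∀ k, 1 ≤ k → lam k ≤ mu) ∧
      Tendsto lam atTop (nhds mu) := by
  classical
  -- monotonicity of a in k
  have hamono : ∀ n, Monotone (fun k => a k n) := by
    intro n
    exact monotone_nat_of_le_succ fun k => hmono k n
  -- `o` bounds
  have ho1 : ∀ n, 1 ≤ n → 1 ≤ o n := fun n hn =>
    le_trans (hbound 1 le_rfl n hn).1 (hbound 1 le_rfl n hn).2.1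
  have hoC : ∀ n, 1 ≤ n → o n ≤ C ^ n := fun n hn => (hbound 1 le_rfl n hn).2.2
  -- Fekete for each a k (k ≥ 1)
  have spec : ∀ k : ℕ, ∃ L, Tendsto (fun n : ℕ => (a (max k 1) n) ^ (1 / (n : ℝ))) atTop
      (nhds L) ∧ IsLUB {x : ℝ | ∃ n : ℕ, 1 ≤ n ∧ x = (a (max k 1) n) ^ (1 / (n : ℝ))} L := by
    intro k
    have hk1 : 1 ≤ max k 1 := le_max_right _ _
    exact fekete_sup (a (max k 1)) C hC (fun n hn => (hbound _ hk1 n hn).1)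
      (fun n hn => le_trans (hbound _ hk1 n hn).2.1 (hbound _ hk1 n hn).2.2)
      (fun m n hm hn => hsuper _ m n hm hn)
  have ospec : ∃ L, Tendsto (fun n : ℕ => (o n) ^ (1 / (n : ℝ))) atTop (nhds L) ∧
      IsLUB {x : ℝ | ∃ n : ℕ, 1 ≤ n ∧ x = (o n) ^ (1 / (n : ℝ))} L :=
    fekete_sup o C hC ho1 hoC hosuper
  set lam : ℕ → ℝ := fun k => (spec k).choose with hlam
  obtain ⟨mu, hmu_t, hmu_lub⟩ := ospec
  have hlamt : ∀ k, Tendsto (fun n : ℕ => (a (max k 1) n) ^ (1 / (n : ℝ))) atTop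
      (nhds (lam k)) := fun k => (spec k).choose_spec.1
  have hlamlub : ∀ k, IsLUB {x : ℝ | ∃ n : ℕ, 1 ≤ n ∧ x = (a (max k 1) n) ^ (1 / (n : ℝ))}
      (lam k) := fun k => (spec k).choose_spec.2
  have hmax : ∀ k : ℕ, 1 ≤ k → max k 1 = k := fun k hk => max_eq_left hk
  -- key comparison of LUBs
  have hlub_le : ∀ k₁ k₂ : ℕ, (∀ n, 1 ≤ n → a (max k₁ 1) n ≤ a (max k₂ 1) n) →
      lam k₁ ≤ lam k₂ := by
    intro k₁ k₂ h
    refine (hlamlub k₁).2 ?_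
    rintro x ⟨n, hn, rfl⟩
    have h1 : (0:ℝ) ≤ a (max k₁ 1) n := le_trans zero_le_one (hbound _ (le_max_right _ _) n hn).1
    have : a (max k₁ 1) n ^ (1 / (n:ℝ)) ≤ a (max k₂ 1) n ^ (1 / (n:ℝ)) :=
      Real.rpow_le_rpow h1 (h n hn) (by positivity)
    exact le_trans this ((hlamlub k₂).1 ⟨n, hn, rfl⟩)
  have hlam_mono : Monotone lam := by
    apply monotone_nat_of_le_succ
    intro k
    refine hlub_le k (k + 1) fun n hn => ?_
    exact hamono n (by omega : max k 1 ≤ max (k + 1) 1)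
  have hlam_le_mu : ∀ k, lam k ≤ mu := by
    intro k
    refine (hlamlub k).2 ?_
    rintro x ⟨n, hn, rfl⟩
    have h1 : (0:ℝ) ≤ a (max k 1) n := le_trans zero_le_one (hbound _ (le_max_right _ _) n hn).1
    have : a (max k 1) n ^ (1 / (n:ℝ)) ≤ o n ^ (1 / (n:ℝ)) :=
      Real.rpow_le_rpow h1 (hbound _ (le_max_right _ _) n hn).2.1 (by positivity)
    exact le_trans this (hmu_lub.1 ⟨n, hn, rfl⟩)
  refine ⟨lam, mu, ?_, ?_, hmu_t, hmu_lub, ?_, ?_, ?_⟩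
  · intro k hk; have := hlamt k; rwa [hmax k hk] at this
  · intro k hk; have := hlamlub k; rwa [hmax k hk] at this
  · intro k _; exact hlam_mono (Nat.le_succ k)
  · intro k _; exact hlam_le_mu k
  · -- lam tends to mu
    apply tendsto_atTop_isLUB hlam_mono
    constructor
    · rintro x ⟨k, rfl⟩; exact hlam_le_mu k
    · intro b hb
      -- b is an upper bound for all lam k; show mu ≤ b
      refine hmu_lub.2 ?_
      rintro x ⟨n, hn, rfl⟩
      obtain ⟨k, hk⟩ := hconv n hn
      have hk' : a k n ≤ a (max k 1) n := hamono n (le_max_left _ _)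
      have hk'' : a (max k 1) n ≤ o n := (hbound _ (le_max_right _ _) n hn).2.1
      have heq : a (max k 1) n = o n := le_antisymm hk'' (hk ▸ hk')
      have : o n ^ (1 / (n:ℝ)) ≤ lam k := by
        rw [← heq]; exact (hlamlub k).1 ⟨n, hn, rfl⟩
      exact le_trans this (hb ⟨k, rfl⟩)
end

section
/- Let M ∈ ℚ[[t]] be the formal power series M = 1 + ∑_{n≥1} m_n t^n where m_n = 3·2^{n-1}·C(2n,n)/((n+1)(n+2)) for n ≥ 1 (the number of rooted planar Eulerian maps with n edges). Then 16t²·M² − (8t² + 12t − 1)·M + (t² + 11t − 1) = 0 in ℚ[[t]]. -/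
/-!
Writing `G(t) = ∑ Cat_n (2t)ⁿ`, the identity `C(2n,n) = (n+1) Cat_n` and the Catalan recurrence
give `m_n = 2^(n-2) (4 Cat_n - Cat_{n+1})` for `n ≥ 1`, i.e. `8tM = (8t - 1) G + 2t + 1`.
Substituting this into the Catalan equation `G = 1 + 2t G²` yields `8t` times the claimed quadratic
relation, and `8t` is not a zero divisor in `ℚ[[t]]`.
-/

open PowerSeries

theorem four_mul_catalan_sub_catalan_succ {K : Type*} [Field K] [CharZero K] (n : ℕ) :
    4 * (catalan n : K) - catalan (n + 1) = 6 * n.centralBinom / ((n + 1) * (n + 2)) := by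
  have hn := succ_mul_catalan_eq_centralBinom n
  have hn1 := succ_mul_catalan_eq_centralBinom (n + 1)
  have hc := Nat.succ_mul_centralBinom_succ n
  have hpos : ((n : K) + 1) * (n + 2) ≠ 0 := by norm_cast
  rw [eq_div_iff hpos]
  apply_fun (Nat.cast : ℕ → K) at hn hn1 hc
  push_cast at hn hn1 hc
  linear_combination (4 * (n + 2 : K)) * hn - (n + 1 : K) * hn1 - hc

noncomputable def rescaledCatalanSeries {R : Type*} [CommSemiring R] (a : R) : R⟦X⟧ :=
  rescale a (map (Nat.castRingHom R) catalanSeries)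

section CommSemiring

variable {R : Type*} [CommSemiring R] (a : R)

@[simp]
theorem coeff_rescaledCatalanSeries (n : ℕ) :
    coeff n (rescaledCatalanSeries a) = a ^ n * catalan n := by
  simp [rescaledCatalanSeries, coeff_rescale]

@[simp]
theorem constantCoeff_rescaledCatalanSeries : constantCoeff (rescaledCatalanSeries a) = 1 := by
  simp [← coeff_zero_eq_constantCoeff_apply, -coeff_zero_eq_constantCoeff]

end CommSemiring

theorem rescaledCatalanSeries_eq {R : Type*} [CommRing R] (a : R) :
    rescaledCatalanSeries a = 1 + C a * X * rescaledCatalanSeries a ^ 2 := by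
  have h := congrArg (fun f => rescale a (map (Nat.castRingHom R) f))
    catalanSeries_sq_mul_X_add_one
  simp only [map_add, map_mul, map_pow, map_one, map_X, rescale_X] at h
  conv_lhs => rw [rescaledCatalanSeries, ← h]
  rw [rescaledCatalanSeries]
  ring

theorem eight_mul_X_mul_eq_rescaledCatalanSeries (M : ℚ⟦X⟧) (h0 : coeff 0 M = 1)
    (h : ∀ n : ℕ, 1 ≤ n → coeff n M =
      (3 * 2 ^ (n - 1) * (Nat.choose (2 * n) n : ℚ)) / (((n : ℚ) + 1) * ((n : ℚ) + 2))) :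
    8 * X * M = (8 * X - 1) * rescaledCatalanSeries 2 + 2 * X + 1 := by
  ext (_ | n)
  · simp
  · rw [← map_ofNat C 8, ← map_ofNat C 2]
    simp only [mul_comm _ X, mul_assoc, coeff_succ_X_mul, coeff_C_mul, sub_mul, one_mul, map_add,
      map_sub, coeff_rescaledCatalanSeries, coeff_mul_C, coeff_one, Nat.add_eq_zero_iff,
      one_ne_zero, and_false, if_false, add_zero]
    cases n with
    | zero => norm_num [h0, coeff_X]
    | succ k =>
      have hcat := four_mul_catalan_sub_catalan_succ (K := ℚ) (k + 1)
      rw [Nat.centralBinom_eq_two_mul_choose] at hcat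
      rw [h (k + 1) k.succ_pos, coeff_X, if_neg (by omega), Nat.add_sub_cancel]
      push_cast at hcat ⊢
      linear_combination (-2 ^ (k + 2) : ℚ) * hcat

/-- The generating function `M(t) = ∑ m_n tⁿ` of rooted planar Eulerian maps,
where `m_n = 3·2^{n-1} C(2n,n) / ((n+1)(n+2))` for `n ≥ 1` and `m_0 = 1`,
satisfies `16 t² M² − (8t² + 12t − 1) M + (t² + 11t − 1) = 0`. -/
theorem eulerian_maps_gf_algebraic (M : PowerSeries ℚ)
    (h0 : PowerSeries.coeff 0 M = 1)
    (h : ∀ n : ℕ, 1 ≤ n → PowerSeries.coeff n M =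
      (3 * 2 ^ (n - 1) * (Nat.choose (2 * n) n : ℚ)) / (((n : ℚ) + 1) * ((n : ℚ) + 2))) :
    16 * X ^ 2 * M ^ 2 - (8 * X ^ 2 + 12 * X - 1) * M + (X ^ 2 + 11 * X - 1) = 0 := by
  set G := rescaledCatalanSeries (2 : ℚ)
  have hG : G = 1 + 2 * X * G ^ 2 := by
    simpa only [map_ofNat] using rescaledCatalanSeries_eq (2 : ℚ)
  have hM := eight_mul_X_mul_eq_rescaledCatalanSeries M h0 h
  have h8X : (8 * X : ℚ⟦X⟧) ≠ 0 := by
    rw [← map_ofNat C 8]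
    simp [X_ne_zero]
  refine mul_left_cancel₀ h8X ?_
  linear_combination
    (2 * X * (8 * X * M - 2 * X - 1 + (8 * X - 1) * G) - (8 * X - 1)) * hM - (8 * X - 1) ^ 2 * hG
end

section
/- There exists exactly one pair (Y_1, Y_2) of formal power series in ℂ[[z_1, z_2]] such that Y_1 does not depend on the variable z_2 and z_2·Y_2 = z_2 + z_1·z_2·(1+z_2)·Y_2² + z_1·(1+z_2)·(Y_2 − Y_1) holds in ℂ[[z_1, z_2]]. Moreover, for this pair, Y_1 is the specialization of Y_2 at z_2 = 0. -/
/-!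
Transport everything to `K⟦z₂⟧⟦z₁⟧` and compare coefficients of `z₁ⁿ`. The constant term gives
`[z₁⁰] Y₂ = 1`. In the coefficient of `z₁ⁿ⁺¹`, setting `z₂ = 0` forces `[z₁ⁿ] Y₁ = ([z₁ⁿ] Y₂)(0)`,
because `Y₁` is constant in `z₂`; the remaining equation is then divisible by `z₂`, and dividing by
`z₂` expresses `[z₁ⁿ⁺¹] Y₂` through `[z₁ⁱ] Y₂` for `i ≤ n`. This recursion determines `Y₂`, and
taking it as a definition produces the solution.
-/

open scoped PowerSeries

noncomputable section

namespace PowerSeries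
variable {R : Type*}

lemma coeff_sq [CommSemiring R] (f : R⟦X⟧) (n : ℕ) :
    coeff n (f ^ 2) = ∑ i : Fin (n + 1), coeff i f * coeff (n - i) f := by
  rw [sq, coeff_mul,
    Finset.Nat.sum_antidiagonal_eq_sum_range_succ (fun i j => coeff i f * coeff j f),
    Fin.sum_univ_eq_sum_range (fun i => coeff i f * coeff (n - i) f)]

lemma eq_C_add_X_mul_iff [Semiring R] {f g : R⟦X⟧} {a : R} :
    f = C a + X * g ↔ coeff 0 f = a ∧ ∀ n, coeff (n + 1) f = coeff n g := by
  refine ⟨fun h => by simp [h, coeff_succ_X_mul], fun ⟨h0, hsucc⟩ => ?_⟩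
  ext (_ | n)
  · simp [h0]
  · simp [hsucc, coeff_succ_X_mul]

lemma exists_eq_map_C_iff [CommSemiring R] (F : R⟦X⟧⟦X⟧) :
    (∃ y : R⟦X⟧, F = map C y) ↔ ∀ i j, j ≠ 0 → coeff j (coeff i F) = 0 := by
  refine ⟨?_, fun h => ⟨map constantCoeff F, ?_⟩⟩
  · rintro ⟨y, rfl⟩ i j hj
    simp [coeff_C, hj]
  · ext i (_ | j)
    · simp
    · simp [h i (j + 1)]

end PowerSeries

namespace PowerSeries.EulerianMaps
variable (K : Type*) [CommRing K]

/-- `mk fun p => coeff (p + 1) f` is `(f - f(0)) / X` (`PowerSeries.sub_const_eq_X_mul_shift`). -/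
def eulerianCoeff : ℕ → K⟦X⟧
  | 0 => 1
  | n + 1 => (1 + X) * (∑ i : Fin (n + 1), eulerianCoeff i * eulerianCoeff (n - i) +
      mk fun p => coeff (p + 1) (eulerianCoeff n))

def eulerianSeries : K⟦X⟧⟦X⟧ := mk (eulerianCoeff K)

variable {K}

theorem eq_eulerianSeries_iff {Y : K⟦X⟧⟦X⟧} :
    Y = eulerianSeries K ↔ coeff 0 Y = 1 ∧ ∀ n, coeff (n + 1) Y =
      (1 + X) * (coeff n (Y ^ 2) + mk fun p => coeff (p + 1) (coeff n Y)) := by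
  constructor
  · rintro rfl
    refine ⟨by simp [eulerianSeries, eulerianCoeff], fun n => ?_⟩
    simp only [eulerianSeries, coeff_sq, coeff_mk]
    rw [eulerianCoeff]
  · rintro ⟨h0, hsucc⟩
    have hcoeff : ∀ n, coeff n Y = eulerianCoeff K n := by
      intro n
      induction n using Nat.strong_induction_on with
      | _ n ih =>
        rcases n with _ | n
        · rw [h0, eulerianCoeff]
        · rw [hsucc, coeff_sq, eulerianCoeff, ih n n.lt_succ_self]
          congr 3
          funext i
          rw [ih i i.isLt, ih (n - i) (by omega)]
    ext1 n
    rw [hcoeff, eulerianSeries, coeff_mk]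

theorem kernel_coeff_succ_iff {a b s : K⟦X⟧} {r : K} :
    X * b = X * (1 + X) * s + (1 + X) * (a - C r) ↔
      r = constantCoeff a ∧ b = (1 + X) * (s + mk fun p => coeff (p + 1) a) := by
  constructor
  · intro h
    have hr : r = constantCoeff a := by
      have := congrArg constantCoeff h
      simp only [map_mul, constantCoeff_X, zero_mul, map_add, constantCoeff_one, add_zero,
        mul_one, map_sub, constantCoeff_C, one_mul, zero_add] at this
      linear_combination this
    refine ⟨hr, X_mul_cancel ?_⟩
    rw [h, hr, sub_const_eq_X_mul_shift]
    ring
  · rintro ⟨rfl, rfl⟩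
    rw [sub_const_eq_X_mul_shift]
    ring

/-- The kernel equation in `K⟦z₂⟧⟦z₁⟧`: the outer variable is `z₁`, the inner one `z₂`. -/
def KernelEquation (Y₁ Y₂ : K⟦X⟧⟦X⟧) : Prop :=
  C X * Y₂ = C X + X * C X * (1 + C X) * Y₂ ^ 2 + X * (1 + C X) * (Y₂ - Y₁)

theorem kernelEquation_map_C_iff {y : K⟦X⟧} {Y : K⟦X⟧⟦X⟧} :
    KernelEquation (map C y) Y ↔ Y = eulerianSeries K ∧ y = map constantCoeff Y := by
  have hrhs : C X + X * C X * (1 + C X) * Y ^ 2 + X * (1 + C X) * (Y - map C y) =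
      C X + X * (C (X * (1 + X)) * Y ^ 2 + C (1 + X) * (Y - map C y)) := by
    simp only [map_mul, map_add, map_one]
    ring
  have hconst : X * coeff 0 Y = X ↔ coeff 0 Y = 1 := by
    rw [← X_mul_inj (φ := coeff 0 Y) (ψ := 1), mul_one]
  have hcoeff : ∀ n, coeff n (C (X * (1 + X)) * Y ^ 2 + C (1 + X) * (Y - map C y)) =
      X * (1 + X) * coeff n (Y ^ 2) + (1 + X) * (coeff n Y - C (coeff n y)) := by
    intro n
    rw [map_add, coeff_C_mul, coeff_C_mul, map_sub, coeff_map]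
  have hy : y = map constantCoeff Y ↔ ∀ n, coeff n y = constantCoeff (coeff n Y) := by
    simp only [PowerSeries.ext_iff, coeff_map]
  rw [KernelEquation, hrhs, eq_C_add_X_mul_iff, eq_eulerianSeries_iff, hy, coeff_C_mul, hconst]
  simp only [coeff_C_mul, hcoeff, kernel_coeff_succ_iff, forall_and]
  tauto

end PowerSeries.EulerianMaps

namespace MvPowerSeries

open PowerSeries.EulerianMaps

def finTwoEquivOptionUnit : Fin 2 ≃ Option Unit where
  toFun := ![none, some ()]
  invFun o := o.elim 0 fun _ => 1
  left_inv i := by fin_cases i <;> rfl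
  right_inv o := by rcases o with _ | _ <;> rfl

variable (K : Type*) [CommRing K]

def finTwoAlgEquiv : MvPowerSeries (Fin 2) K ≃ₐ[K] K⟦X⟧⟦X⟧ :=
  (renameEquiv K finTwoEquivOptionUnit).trans (optionEquivLeft Unit K)

variable {K}

@[simp]
lemma finTwoAlgEquiv_X_zero : finTwoAlgEquiv K (X 0) = PowerSeries.X := by
  simp [finTwoAlgEquiv, finTwoEquivOptionUnit]

@[simp]
lemma finTwoAlgEquiv_X_one : finTwoAlgEquiv K (X 1) = PowerSeries.C PowerSeries.X := by
  change _ = PowerSeries.C (X ())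
  simp [finTwoAlgEquiv, finTwoEquivOptionUnit]

lemma coeff_eq_coeff_coeff_finTwoAlgEquiv (p : MvPowerSeries (Fin 2) K) (m : Fin 2 →₀ ℕ) :
    coeff m p = PowerSeries.coeff (m 1) (PowerSeries.coeff (m 0) (finTwoAlgEquiv K p)) := by
  have hm : (Finsupp.single () (m 1)).optionElim (m 0) =
      m.embDomain finTwoEquivOptionUnit.toEmbedding := by
    ext o
    rcases o with _ | _
    · simpa [finTwoEquivOptionUnit] using
        (m.embDomain_apply_self finTwoEquivOptionUnit.toEmbedding 0).symm
    · simpa [finTwoEquivOptionUnit] using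
        (m.embDomain_apply_self finTwoEquivOptionUnit.toEmbedding 1).symm
  rw [← coeff_embDomain_rename, ← hm, ← coeff_coeff_optionEquivLeft]
  rfl

theorem exists_finTwoAlgEquiv_eq_map_C_iff (p : MvPowerSeries (Fin 2) K) :
    (∃ y : K⟦X⟧, finTwoAlgEquiv K p = PowerSeries.map PowerSeries.C y) ↔
      ∀ m : Fin 2 →₀ ℕ, coeff m p ≠ 0 → m 1 = 0 := by
  rw [PowerSeries.exists_eq_map_C_iff]
  constructor
  · intro h m
    contrapose!
    rw [coeff_eq_coeff_coeff_finTwoAlgEquiv]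
    exact h _ _
  · intro h i j hj
    have hi : (Finsupp.single 0 i + Finsupp.single 1 j : Fin 2 →₀ ℕ) 0 = i := by simp
    have hj' : (Finsupp.single 0 i + Finsupp.single 1 j : Fin 2 →₀ ℕ) 1 = j := by simp
    have hm := mt (h (Finsupp.single 0 i + Finsupp.single 1 j))
    rw [coeff_eq_coeff_coeff_finTwoAlgEquiv, hi, hj', not_not] at hm
    exact hm hj

theorem kernelEquation_finTwoAlgEquiv_iff (Y₁ Y₂ : MvPowerSeries (Fin 2) K) :
    KernelEquation (finTwoAlgEquiv K Y₁) (finTwoAlgEquiv K Y₂) ↔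
      X 1 * Y₂ = X 1 + X 0 * X 1 * (1 + X 1) * Y₂ ^ 2 + X 0 * (1 + X 1) * (Y₂ - Y₁) := by
  rw [KernelEquation, ← (finTwoAlgEquiv K).injective.eq_iff]
  simp only [map_add, map_sub, map_mul, map_pow, map_one, finTwoAlgEquiv_X_zero,
    finTwoAlgEquiv_X_one]

variable (K) in
def eulerianSolution : MvPowerSeries (Fin 2) K × MvPowerSeries (Fin 2) K :=
  ((finTwoAlgEquiv K).symm
      (PowerSeries.map PowerSeries.C
        (PowerSeries.map PowerSeries.constantCoeff (eulerianSeries K))),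
    (finTwoAlgEquiv K).symm (eulerianSeries K))

theorem kernelEquation_iff_eq_eulerianSolution
    (p : MvPowerSeries (Fin 2) K × MvPowerSeries (Fin 2) K) :
    ((∀ m : Fin 2 →₀ ℕ, coeff m p.1 ≠ 0 → m 1 = 0) ∧
      X 1 * p.2 = X 1 + X 0 * X 1 * (1 + X 1) * p.2 ^ 2 + X 0 * (1 + X 1) * (p.2 - p.1)) ↔
    p = eulerianSolution K := by
  rw [← exists_finTwoAlgEquiv_eq_map_C_iff, ← kernelEquation_finTwoAlgEquiv_iff,
    eulerianSolution, Prod.ext_iff, AlgEquiv.eq_symm_apply, AlgEquiv.eq_symm_apply]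
  constructor
  · rintro ⟨⟨y, hy⟩, h⟩
    rw [hy, kernelEquation_map_C_iff] at h
    obtain ⟨h₂, rfl⟩ := h
    exact ⟨by rw [hy, h₂], h₂⟩
  · rintro ⟨h₁, h₂⟩
    refine ⟨⟨_, h₁⟩, ?_⟩
    rw [h₁, h₂, kernelEquation_map_C_iff]
    exact ⟨rfl, rfl⟩

theorem coeff_fst_eulerianSolution_eq_coeff_snd {m : Fin 2 →₀ ℕ} (hm : m 1 = 0) :
    coeff m (eulerianSolution K).1 = coeff m (eulerianSolution K).2 := by
  simp [eulerianSolution, coeff_eq_coeff_coeff_finTwoAlgEquiv _ m, hm]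

end MvPowerSeries

open MvPowerSeries in
/-- There is exactly one pair `(Y₁, Y₂)` of formal power series in
`ℂ[[z₁, z₂]]` with `Y₁` independent of `z₂` satisfying
`z₂ Y₂ = z₂ + z₁ z₂ (1+z₂) Y₂² + z₁ (1+z₂) (Y₂ − Y₁)`;
moreover `Y₁` is the specialization of `Y₂` at `z₂ = 0`.
(This encodes the enumeration of rooted planar Eulerian maps by edges and
root degree, with `z₁ = t` and `z₂ = x − 1`.) -/
theorem eulerian_maps_kernel_unique :
    (∃! p : MvPowerSeries (Fin 2) ℂ × MvPowerSeries (Fin 2) ℂ,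
      (∀ m : Fin 2 →₀ ℕ, MvPowerSeries.coeff m p.1 ≠ 0 → m 1 = 0) ∧
      (X 1 : MvPowerSeries (Fin 2) ℂ) * p.2 =
        X 1 + X 0 * X 1 * (1 + X 1) * p.2 ^ 2 + X 0 * (1 + X 1) * (p.2 - p.1)) ∧
    (∀ p : MvPowerSeries (Fin 2) ℂ × MvPowerSeries (Fin 2) ℂ,
      ((∀ m : Fin 2 →₀ ℕ, MvPowerSeries.coeff m p.1 ≠ 0 → m 1 = 0) ∧
        (X 1 : MvPowerSeries (Fin 2) ℂ) * p.2 =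
          X 1 + X 0 * X 1 * (1 + X 1) * p.2 ^ 2 + X 0 * (1 + X 1) * (p.2 - p.1)) →
      ∀ m : Fin 2 →₀ ℕ, m 1 = 0 →
        MvPowerSeries.coeff m p.1 = MvPowerSeries.coeff m p.2) := by
  refine ⟨⟨eulerianSolution ℂ, (kernelEquation_iff_eq_eulerianSolution _).mpr rfl,
    fun p hp => (kernelEquation_iff_eq_eulerianSolution p).mp hp⟩, fun p hp m hm => ?_⟩
  rw [(kernelEquation_iff_eq_eulerianSolution p).mp hp]
  exact coeff_fst_eulerianSolution_eq_coeff_snd hm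
end
end

section
/- There exists exactly one triple (K, L, L_0) of formal power series in ℚ[[t]] satisfying the system: K = t + t·L_0; L = 1 + 2t·L² + t·(L − 1) + 2t·(L_0 − K); L_0 = 2t·L·L_0 + t·L + t·L_0 + t·(L_0 − K). Moreover, the series L of this unique solution satisfies the quadratic equation 2t·L² − (1−t)²·L − t² − 2t + 1 = 0 in ℚ[[t]]. -/
/-!
Multiplying equation (11) by `2t` gives a monic equation for `W = 2tL`, which reduces modulo `t`
to `W² - W = 0` with the simple root `0`; as `ℚ[[t]]` is `t`-adically complete, Hensel's lemma
lifts it to a solution `L`. A combination of the three equations of the system is (11) times the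
unit `1 - t - 2tL`, and another one is `L₀((1 - t)² - 2tL) = t(L - t)`, which determines `L₀`, and
then `K`, from `L`; conversely these formulas solve the system whenever `L` solves (11). Finally,
two solutions of (11) satisfy `(L - L')(2t(L + L') - (1 - t)²) = 0`, whose second factor is a unit.
-/

open PowerSeries

/-- The system (for `k = 1`, after the 0/1 symmetry) of Proposition 3.1:
`K = t + t L₀`, `L = 1 + 2t L² + t(L−1) + 2t(L₀ − K)`,
`L₀ = 2t L L₀ + t L + t L₀ + t(L₀ − K)`. -/
def SysL1 (K L L0 : PowerSeries ℚ) : Prop :=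
  K = X + X * L0 ∧
  L = 1 + 2 * X * L ^ 2 + X * (L - 1) + 2 * X * (L0 - K) ∧
  L0 = 2 * X * L * L0 + X * L + X * L0 + X * (L0 - K)

namespace PowerSeries

theorem exists_isRoot_of_monic {R : Type*} [CommRing R] (f : Polynomial R⟦X⟧) (hf : f.Monic)
    (a₀ : R⟦X⟧) (h₀ : constantCoeff (f.eval a₀) = 0)
    (h₁ : IsUnit (constantCoeff (f.derivative.eval a₀))) :
    ∃ a, f.IsRoot a ∧ X ∣ a - a₀ := by
  simp only [← Ideal.mem_span_singleton, ← X_dvd_iff] at h₀ ⊢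
  exact HenselianRing.is_henselian f hf a₀ h₀ ((isUnit_iff_constantCoeff.mpr h₁).map _)

theorem eq_zero_of_mul_eq_zero_of_constantCoeff_ne_zero {k : Type*} [Field k] {f g : k⟦X⟧}
    (h : f * g = 0) (hg : constantCoeff g ≠ 0) : f = 0 :=
  (mul_eq_zero.mp h).resolve_right fun hg0 => hg (by rw [hg0, map_zero])

end PowerSeries

theorem exists_quadratic_root :
    ∃ L : ℚ⟦X⟧, 2 * X * L ^ 2 - (1 - X) ^ 2 * L - X ^ 2 - 2 * X + 1 = 0 := by
  let f : Polynomial ℚ⟦X⟧ := .X ^ 2 - .C ((1 - X) ^ 2) * .X + .C (2 * X * (1 - 2 * X - X ^ 2))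
  have hf : f.Monic := by unfold f; monicity!
  obtain ⟨W, hW, V, hWV⟩ := exists_isRoot_of_monic f hf 0 (by simp [f]) (by simp [f])
  rw [sub_zero] at hWV
  subst hWV
  have hXV : X * (X * V ^ 2 - (1 - X) ^ 2 * V + 2 * (1 - 2 * X - X ^ 2)) = 0 := by
    have : (X * V) ^ 2 - (1 - X) ^ 2 * (X * V) + 2 * X * (1 - 2 * X - X ^ 2) = 0 := by
      simpa [f] using hW
    linear_combination this
  have hV := (mul_eq_zero.mp hXV).resolve_left X_ne_zero
  have half : (2 : ℚ⟦X⟧) * C (1 / 2) = 1 := by rw [← map_ofNat C 2, ← map_mul]; norm_num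
  refine ⟨C (1 / 2) * V, ?_⟩
  linear_combination C (1 / 2) * hV + (X * C (1 / 2) * V ^ 2 - (1 - 2 * X - X ^ 2)) * half

theorem eq_of_quadratic {L L' : ℚ⟦X⟧}
    (hL : 2 * X * L ^ 2 - (1 - X) ^ 2 * L - X ^ 2 - 2 * X + 1 = 0)
    (hL' : 2 * X * L' ^ 2 - (1 - X) ^ 2 * L' - X ^ 2 - 2 * X + 1 = 0) : L = L' := by
  refine sub_eq_zero.mp <|
    eq_zero_of_mul_eq_zero_of_constantCoeff_ne_zero (g := 2 * X * (L + L') - (1 - X) ^ 2) ?_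
      (by simp)
  linear_combination hL - hL'

theorem exists_sysL1_of_quadratic {L : ℚ⟦X⟧}
    (hL : 2 * X * L ^ 2 - (1 - X) ^ 2 * L - X ^ 2 - 2 * X + 1 = 0) : ∃ K L0, SysL1 K L L0 := by
  set D : ℚ⟦X⟧ := (1 - X) ^ 2 - 2 * X * L
  have hD : constantCoeff D ≠ 0 := by simp [D]
  set L0 := X * (L - X) * D⁻¹
  have hL0 : L0 * D = X * (L - X) := by rw [mul_assoc, PowerSeries.inv_mul_cancel _ hD, mul_one]
  refine ⟨X + X * L0, L0, rfl, ?_, by linear_combination hL0⟩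
  refine sub_eq_zero.mp <| eq_zero_of_mul_eq_zero_of_constantCoeff_ne_zero (g := D) ?_ hD
  linear_combination -2 * X * (1 - X) * hL0 - (D + X * (1 - X)) * hL

namespace SysL1

variable {K L L0 : ℚ⟦X⟧}

theorem quadratic (h : SysL1 K L L0) :
    2 * X * L ^ 2 - (1 - X) ^ 2 * L - X ^ 2 - 2 * X + 1 = 0 := by
  obtain ⟨hK, hL, hL0⟩ := h
  refine eq_zero_of_mul_eq_zero_of_constantCoeff_ne_zero (g := 1 - X - 2 * X * L) ?_ (by simp)
  linear_combination (2 * X * ((1 - X) ^ 2 - 2 * X * L) + 2 * X ^ 2 * (1 - X)) * hK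
    - ((1 - X) ^ 2 - 2 * X * L) * hL - (2 * X * (1 - X)) * hL0

theorem L0_mul_eq (h : SysL1 K L L0) : L0 * ((1 - X) ^ 2 - 2 * X * L) = X * (L - X) := by
  obtain ⟨hK, -, hL0⟩ := h
  linear_combination hL0 - X * hK

theorem unique {K' L' L0' : ℚ⟦X⟧} (h : SysL1 K L L0) (h' : SysL1 K' L' L0') :
    (K, L, L0) = (K', L', L0') := by
  obtain rfl : L = L' := eq_of_quadratic h.quadratic h'.quadratic
  obtain rfl : L0 = L0' := by
    have hD : (L0 - L0') * ((1 - X) ^ 2 - 2 * X * L) = 0 := by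
      linear_combination h.L0_mul_eq - h'.L0_mul_eq
    exact sub_eq_zero.mp (eq_zero_of_mul_eq_zero_of_constantCoeff_ne_zero hD (by simp))
  rw [h.1, h'.1]

end SysL1

/-- There is exactly one triple `(K, L, L₀)` of power series in `ℚ[[t]]`
satisfying the system `SysL1`, and the series `L` of this solution satisfies
`2t L² − (1−t)² L − t² − 2t + 1 = 0` (equation (11) of the paper, the
algebraic equation for the generating function of `𝓛⁽¹⁾`). -/
theorem sysL1_unique_and_quadratic :
    (∃! v : PowerSeries ℚ × PowerSeries ℚ × PowerSeries ℚ, SysL1 v.1 v.2.1 v.2.2) ∧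
    (∀ K L L0 : PowerSeries ℚ, SysL1 K L L0 →
      2 * X * L ^ 2 - (1 - X) ^ 2 * L - X ^ 2 - 2 * X + 1 = 0) := by
  obtain ⟨L, hL⟩ := exists_quadratic_root
  obtain ⟨K, L0, h⟩ := exists_sysL1_of_quadratic hL
  exact ⟨⟨(K, L, L0), h, fun v hv => hv.unique h⟩, fun K L L0 h => h.quadratic⟩
end

section
/- There is a unique formal power series L ∈ ℝ[[t]] satisfying 2t·L² − (1−t)²·L + (1 − 2t − t²) = 0. Let ρ be the smallest positive real root of the polynomial X⁴ + 4X³ + 22X² − 12X + 1 (such a root exists). Then there is a constant c > 0 such that the coefficients ℓ_n := [tⁿ]L satisfy ℓ_n · ρⁿ · n^{3/2} → c as n → ∞; in particular ℓ_n ∼ c·(1/ρ)ⁿ·n^{−3/2}. -/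
/-!
Completing the square, `L` solves the quadratic exactly when `T = (1 - X)² - 4XL` satisfies
`T² = Δ₁`. A power series with constant term `1` has exactly one square root with constant term `1`,
which gives existence and uniqueness, and `ℓ_n = -[Xⁿ⁺¹] T / 4` for `n ≥ 2`.

If `ρ` is a root of `Δ₁` then `Δ₁(ρX) = (1 - X)(1 - u)` with `u = rescaledCubic ρ` a cubic with
nonnegative coefficients, so `T(ρX) = √(1 - u) · √(1 - X)`. The coefficients `w_n` of `√(1 - X)`
satisfy `(2n + 2) w_{n+1} = (2n - 1) w_n`, and a monotonicity argument gives
`w_n n^{3/2} → -c₀ < 0`.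
For the smallest positive root, `ρ ≈ 0.1032`, one has `u(3) ≤ 1`, which forces the coefficients of
`√(1 - u)` to be `O(3⁻ⁿ)`; likewise `u(1) ≤ 3/4` forces `√(1 - u)(1) ≥ 1/2`. Dominated convergence
in the Cauchy product then gives `[Xⁿ] T(ρX) · n^{3/2} → -c₀ · √(1 - u)(1)`.
-/

open PowerSeries Filter Finset

namespace PowerSeries

variable {K : Type*} [Field K]

-- Solve `[Xⁿ⁺¹] S² = 2 s_{n+1} + ∑_{k<n} s_{k+1} s_{n-k}` for `s_{n+1}`.
noncomputable def sqrtCoeff (F : K⟦X⟧) : ℕ → K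
  | 0 => 1
  | n + 1 => (coeff (n + 1) F - ∑ k : Fin n, sqrtCoeff F (k + 1) * sqrtCoeff F (n - k)) / 2
  decreasing_by all_goals omega

noncomputable def sqrt (F : K⟦X⟧) : K⟦X⟧ := mk (sqrtCoeff F)

@[simp]
theorem constantCoeff_sqrt (F : K⟦X⟧) : constantCoeff (sqrt F) = 1 := by
  rw [← coeff_zero_eq_constantCoeff_apply, sqrt, coeff_mk, sqrtCoeff]

theorem coeff_succ_sqrt (F : K⟦X⟧) (n : ℕ) :
    coeff (n + 1) (sqrt F) = (coeff (n + 1) F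
      - ∑ k ∈ range n, coeff (k + 1) (sqrt F) * coeff (n - k) (sqrt F)) / 2 := by
  simp only [sqrt, coeff_mk]
  rw [sqrtCoeff, Finset.sum_range (fun k => sqrtCoeff F (k + 1) * sqrtCoeff F (n - k))]

variable [NeZero (2 : K)]

theorem sq_sqrt {F : K⟦X⟧} (hF : constantCoeff F = 1) : sqrt F ^ 2 = F := by
  ext n
  rw [sq, coeff_mul, Nat.sum_antidiagonal_eq_sum_range_succ
    (fun i j => coeff i (sqrt F) * coeff j (sqrt F))]
  cases n with
  | zero => simp [hF]
  | succ n =>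
    rw [sum_range_succ, sum_range_succ']
    simp only [coeff_zero_eq_constantCoeff_apply, constantCoeff_sqrt, Nat.sub_self,
      Nat.sub_zero, Nat.succ_sub_succ, one_mul, mul_one]
    rw [coeff_succ_sqrt F n]
    field_simp
    ring

theorem eq_of_sq_eq_sq {S T : K⟦X⟧} (hS : constantCoeff S = 1) (hT : constantCoeff T = 1)
    (h : S ^ 2 = T ^ 2) : S = T := by
  refine (sq_eq_sq_iff_eq_or_eq_neg.1 h).resolve_right fun hneg => ?_
  have h2 := congrArg constantCoeff hneg
  rw [map_neg, hS, hT, eq_neg_iff_add_eq_zero, one_add_one_eq_two] at h2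
  exact two_ne_zero h2

theorem derivative_sqrt {F : K⟦X⟧} (hF : constantCoeff F = 1) :
    2 * F * d⁄dX K (sqrt F) = d⁄dX K F * sqrt F := by
  have hsq := sq_sqrt hF
  have hD := congrArg (d⁄dX K) hsq
  rw [sq, Derivation.leibniz, smul_eq_mul] at hD
  linear_combination sqrt F * hD - 2 * d⁄dX K (sqrt F) * hsq

end PowerSeries

theorem sum_range_sum_antidiagonal_le_sq {R : Type*} [CommSemiring R] [PartialOrder R]
    [IsOrderedRing R] {a : ℕ → R} (ha : ∀ n, 0 ≤ a n) (ha0 : a 0 = 0) (N : ℕ) :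
    ∑ n ∈ range (N + 1), ∑ p ∈ antidiagonal n, a p.1 * a p.2 ≤ (∑ n ∈ range N, a n) ^ 2 := by
  have htriangle : ∑ n ∈ range (N + 1), ∑ p ∈ antidiagonal n, a p.1 * a p.2
      = ∑ i ∈ range (N + 1), a i * ∑ j ∈ range (N + 1 - i), a j := by
    simp_rw [Nat.sum_antidiagonal_eq_sum_range_succ (fun i j => a i * a j), mul_sum]
    rw [sum_comm' (t' := range (N + 1)) (s' := fun i => Ico i (N + 1))
      (h := by intro n i; simp only [mem_range, mem_Ico]; omega)]
    refine sum_congr rfl fun i _ => ?_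
    rw [sum_Ico_eq_sum_range]
    simp only [Nat.add_sub_cancel_left]
  rw [htriangle, sum_range_succ, Nat.add_sub_cancel_left, sum_range_one, ha0, mul_zero, add_zero,
    sq, sum_mul]
  refine sum_le_sum fun i _ => ?_
  rcases Nat.eq_zero_or_pos i with rfl | hi0
  · simp [ha0]
  · exact mul_le_mul_of_nonneg_left (sum_le_sum_of_subset_of_nonneg
      (range_subset_range.2 (by omega)) fun j _ _ => ha j) (ha i)

section Majorant

variable {K : Type*} [Field K] [LinearOrder K] [IsStrictOrderedRing K]
  {u : K⟦X⟧} (hu0 : constantCoeff u = 0)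
include hu0

theorem two_mul_coeff_one_sub_sqrt_one_sub (n : ℕ) :
    2 * coeff n (1 - sqrt (1 - u)) = coeff n u
      + ∑ p ∈ antidiagonal n, coeff p.1 (1 - sqrt (1 - u)) * coeff p.2 (1 - sqrt (1 - u)) := by
  have h : C 2 * (1 - sqrt (1 - u)) = u + (1 - sqrt (1 - u)) ^ 2 := by
    rw [map_ofNat]
    linear_combination -sq_sqrt (F := 1 - u) (by simp [hu0])
  rw [← coeff_C_mul, h, map_add, sq, coeff_mul]

theorem coeff_one_sub_sqrt_one_sub_nonneg (hu : ∀ n, 0 ≤ coeff n u) (n : ℕ) :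
    0 ≤ coeff n (1 - sqrt (1 - u)) := by
  induction n using Nat.strong_induction_on with
  | _ n ih =>
    have h := two_mul_coeff_one_sub_sqrt_one_sub hu0 n
    have hsum : 0 ≤ ∑ p ∈ antidiagonal n,
        coeff p.1 (1 - sqrt (1 - u)) * coeff p.2 (1 - sqrt (1 - u)) := by
      refine sum_nonneg fun p hp => ?_
      rw [HasAntidiagonal.mem_antidiagonal] at hp
      rcases Nat.eq_zero_or_pos p.1 with h1 | h1
      · simp [h1]
      rcases Nat.eq_zero_or_pos p.2 with h2 | h2
      · simp [h2]
      exact mul_nonneg (ih _ (by omega)) (ih _ (by omega))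
    linarith [hu n]

-- `v = 1 - √(1 - u)` satisfies `2v = u + v²`, so the partial sums `V_N` of `v` at `r` satisfy
-- `2 V_{N+1} ≤ 2s - s² + V_N²`, which keeps them below `s`.
theorem sum_coeff_one_sub_sqrt_one_sub_mul_pow_le (hu : ∀ n, 0 ≤ coeff n u) {r s : K}
    (hr : 0 ≤ r) (hs : 0 ≤ s) (hU : ∀ N, ∑ n ∈ range N, coeff n u * r ^ n ≤ 2 * s - s ^ 2)
    (N : ℕ) : ∑ n ∈ range N, coeff n (1 - sqrt (1 - u)) * r ^ n ≤ s := by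
  set a : ℕ → K := fun n => coeff n (1 - sqrt (1 - u)) * r ^ n
  have ha (n : ℕ) : 0 ≤ a n :=
    mul_nonneg (coeff_one_sub_sqrt_one_sub_nonneg hu0 hu n) (pow_nonneg hr n)
  have ha0 : a 0 = 0 := by simp [a]
  induction N with
  | zero => simpa using hs
  | succ N ih =>
    have htwice : 2 * ∑ n ∈ range (N + 1), a n = ∑ n ∈ range (N + 1), coeff n u * r ^ n
        + ∑ n ∈ range (N + 1), ∑ p ∈ antidiagonal n, a p.1 * a p.2 := by
      rw [mul_sum, ← sum_add_distrib]
      refine sum_congr rfl fun n _ => ?_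
      rw [← mul_assoc, two_mul_coeff_one_sub_sqrt_one_sub hu0, add_mul, sum_mul]
      congr 1
      refine sum_congr rfl fun p hp => ?_
      rw [HasAntidiagonal.mem_antidiagonal] at hp
      rw [← hp, pow_add]
      ring
    have hA : 0 ≤ ∑ n ∈ range N, a n := sum_nonneg fun n _ => ha n
    nlinarith [hU (N + 1), sum_range_sum_antidiagonal_le_sq ha ha0 N]

theorem abs_coeff_sqrt_one_sub_mul_pow_le (hu : ∀ n, 0 ≤ coeff n u) {r : K} (hr : 0 ≤ r)
    (hU : ∀ N, ∑ n ∈ range N, coeff n u * r ^ n ≤ 1) (k : ℕ) :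
    |coeff k (sqrt (1 - u))| * r ^ k ≤ 1 := by
  rcases k with _ | k
  · simp
  have hcoeff : coeff (k + 1) (sqrt (1 - u)) = -coeff (k + 1) (1 - sqrt (1 - u)) := by
    simp [coeff_one]
  have hv := coeff_one_sub_sqrt_one_sub_nonneg hu0 hu
  rw [hcoeff, abs_neg, abs_of_nonneg (hv _)]
  calc coeff (k + 1) (1 - sqrt (1 - u)) * r ^ (k + 1)
      ≤ ∑ n ∈ range (k + 2), coeff n (1 - sqrt (1 - u)) * r ^ n :=
        single_le_sum (f := fun n => coeff n (1 - sqrt (1 - u)) * r ^ n)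
          (fun n _ => mul_nonneg (hv n) (pow_nonneg hr n)) (by simp)
    _ ≤ 1 := sum_coeff_one_sub_sqrt_one_sub_mul_pow_le hu0 hu hr zero_le_one
        (fun N => (hU N).trans_eq (by norm_num)) _

end Majorant

theorem one_sub_le_tsum_coeff_sqrt_one_sub {u : ℝ⟦X⟧} (hu0 : constantCoeff u = 0)
    (hu : ∀ n, 0 ≤ coeff n u) {s : ℝ} (hs : 0 ≤ s)
    (hU : ∀ N, ∑ n ∈ range N, coeff n u ≤ 2 * s - s ^ 2) :
    1 - s ≤ ∑' n, coeff n (sqrt (1 - u)) := by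
  have hv := coeff_one_sub_sqrt_one_sub_nonneg hu0 hu
  have hV (N : ℕ) : ∑ n ∈ range N, coeff n (1 - sqrt (1 - u)) ≤ s := by
    simpa using sum_coeff_one_sub_sqrt_one_sub_mul_pow_le hu0 hu zero_le_one hs
      (by simpa using hU) N
  have hA : HasSum (fun n => coeff n (sqrt (1 - u)))
      (1 - ∑' n, coeff n (1 - sqrt (1 - u))) := by
    have hsplit : (fun n => coeff n (sqrt (1 - u)))
        = fun n => (if n = 0 then 1 else 0) - coeff n (1 - sqrt (1 - u)) := by
      funext n
      simp [coeff_one]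
    rw [hsplit]
    exact (hasSum_ite_eq 0 (1 : ℝ)).sub (summable_of_sum_range_le hv hV).hasSum
  rw [hA.tsum_eq]
  linarith [Real.tsum_le_of_sum_range_le hv hV]

section Recurrence

variable {w : ℕ → ℝ}
  (hw : ∀ n : ℕ, (2 * n + 2) * w (n + 1) = (2 * n - 1) * w n)
include hw

theorem neg_of_recurrence (hw0 : w 0 = 1) {n : ℕ} (hn : 1 ≤ n) : w n < 0 := by
  induction n, hn using Nat.le_induction with
  | base =>
    have h := hw 0
    norm_num [hw0] at h
    linarith
  | succ n hn ih =>
    have h := hw n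
    have : (1 : ℝ) ≤ n := by exact_mod_cast hn
    nlinarith

theorem sq_mul_cube_succ_le_of_recurrence {m : ℕ} (hm : 1 ≤ m) :
    w (m + 1) ^ 2 * ((m + 1 : ℕ) : ℝ) ^ 3 ≤ w m ^ 2 * (m : ℝ) ^ 3 := by
  have h := hw m
  have : (1 : ℝ) ≤ m := by exact_mod_cast hm
  have key : w (m + 1) ^ 2 * (m + 1 : ℝ) ^ 3 * 4 = w m ^ 2 * (4 * m ^ 3 - 3 * m + 1) := by
    have : (w (m + 1) * (2 * m + 2)) ^ 2 = (w m * (2 * m - 1)) ^ 2 := by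
      rw [mul_comm, h]; ring
    nlinarith
  push_cast
  nlinarith [sq_nonneg (w m)]

theorem le_sq_mul_sq_mul_of_recurrence (hw0 : w 0 = 1) {m : ℕ} (hm : 2 ≤ m) :
    1 / 16 ≤ w m ^ 2 * (m : ℝ) ^ 2 * (m - 1) := by
  induction m, hm using Nat.le_induction with
  | base =>
    have h1 := hw 0
    have h2 := hw 1
    norm_num at h1 h2 ⊢
    nlinarith
  | succ m hm ih =>
    have h := hw m
    have : (2 : ℝ) ≤ m := by exact_mod_cast hm
    have key : (w (m + 1) * (2 * m + 2)) ^ 2 = (w m * (2 * m - 1)) ^ 2 := by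
      rw [mul_comm, h]; ring
    push_cast
    nlinarith [sq_nonneg (w m), sq_nonneg (w (m + 1))]

-- `w_n² n³` decreases and `w_n² n² (n - 1)` increases from `1/16`,
-- so `w_n² n³` has a positive limit.
theorem exists_tendsto_mul_rpow_of_recurrence (hw0 : w 0 = 1) :
    ∃ c, 0 < c ∧ Tendsto (fun n : ℕ => w n * (n : ℝ) ^ (3 / 2 : ℝ)) atTop (nhds (-c)) := by
  set p : ℕ → ℝ := fun m => w (m + 1) ^ 2 * ((m + 1 : ℕ) : ℝ) ^ 3
  have hp_anti : Antitone p :=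
    antitone_nat_of_succ_le fun m => sq_mul_cube_succ_le_of_recurrence hw (by omega)
  have hp_ge (m : ℕ) : 1 / 16 ≤ p m := by
    rcases m with _ | m
    · have h := hw 0
      norm_num [hw0] at h
      norm_num [p]
      nlinarith
    · have hq := le_sq_mul_sq_mul_of_recurrence hw hw0 (m := m + 2) (by omega)
      have : (0 : ℝ) ≤ w (m + 2) ^ 2 * ((m + 2 : ℕ) : ℝ) ^ 2 := by positivity
      simp only [p]
      push_cast at hq ⊢
      nlinarith
  have hp_lim := tendsto_atTop_ciInf hp_anti ⟨1 / 16, by rintro _ ⟨m, rfl⟩; exact hp_ge m⟩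
  have hP : 1 / 16 ≤ ⨅ m, p m := le_ciInf hp_ge
  refine ⟨√(⨅ m, p m), by positivity, (tendsto_add_atTop_iff_nat 1).1 ?_⟩
  refine hp_lim.sqrt.neg.congr fun m => ?_
  have hrpow : ((m + 1 : ℕ) : ℝ) ^ (3 / 2 : ℝ) = √(((m + 1 : ℕ) : ℝ) ^ 3) := by
    rw [Real.sqrt_eq_rpow, ← Real.rpow_natCast, ← Real.rpow_mul (Nat.cast_nonneg _)]
    norm_num
  rw [hrpow, Real.sqrt_mul (sq_nonneg _), Real.sqrt_sq_eq_abs,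
    abs_of_neg (neg_of_recurrence hw hw0 (by omega)), neg_mul, neg_neg]

end Recurrence

theorem coeff_sqrt_one_sub_X_recurrence (n : ℕ) :
    (2 * n + 2) * coeff (n + 1) (sqrt (1 - X : ℝ⟦X⟧)) = (2 * n - 1) * coeff n (sqrt (1 - X)) := by
  have hode := derivative_sqrt (F := (1 - X : ℝ⟦X⟧)) (by simp)
  rw [map_sub, Derivation.map_one_eq_zero, derivative_X, zero_sub, neg_one_mul,
    show (2 : ℝ⟦X⟧) * (1 - X) = C 2 - X * C 2 by rw [map_ofNat]; ring, sub_mul, mul_assoc] at hode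
  have h := congrArg (coeff n) hode
  rcases n with _ | n
  · simp only [map_sub, coeff_C_mul, coeff_zero_X_mul, coeff_derivative, map_neg] at h
    norm_num at h ⊢
    linarith
  · simp only [map_sub, coeff_C_mul, coeff_succ_X_mul, coeff_derivative, map_neg] at h
    push_cast at h ⊢
    linarith

theorem exists_tendsto_coeff_sqrt_one_sub_X_mul_rpow :
    ∃ c, 0 < c ∧ Tendsto (fun n : ℕ => coeff n (sqrt (1 - X : ℝ⟦X⟧)) * (n : ℝ) ^ (3 / 2 : ℝ))
      atTop (nhds (-c)) :=
  exists_tendsto_mul_rpow_of_recurrence coeff_sqrt_one_sub_X_recurrence (by simp)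

theorem tendsto_mul_add_rpow_of_tendsto_mul_rpow {b : ℕ → ℝ} {α β : ℝ} (c : ℝ)
    (hb : Tendsto (fun n : ℕ => b n * (n : ℝ) ^ α) atTop (nhds β)) :
    Tendsto (fun n : ℕ => b n * ((n : ℝ) + c) ^ α) atTop (nhds β) := by
  have hratio : Tendsto (fun n : ℕ => (1 + c / n) ^ α) atTop (nhds 1) := by
    have h := (tendsto_const_div_atTop_nhds_zero_nat c).const_add 1
    rw [add_zero] at h
    have h' := (Real.continuousAt_rpow_const 1 α (Or.inl one_ne_zero)).tendsto.comp h
    rwa [Real.one_rpow] at h'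
  refine (by simpa using hb.mul hratio : Tendsto _ atTop (nhds β)).congr' ?_
  filter_upwards [eventually_gt_atTop ⌈|c|⌉₊] with n hn
  have hn' : |c| < n := Nat.lt_of_ceil_lt hn
  have hn0 : (0 : ℝ) < n := (abs_nonneg c).trans_lt hn'
  have hnc : 0 < (n : ℝ) + c := by linarith [neg_abs_le c]
  have hsplit : (1 + c / n : ℝ) = ((n : ℝ) + c) / n := by field_simp
  rw [hsplit, Real.div_rpow hnc.le hn0.le]
  field_simp [(Real.rpow_pos_of_pos hn0 α).ne']

theorem abs_mul_rpow_le_of_le {b : ℕ → ℝ} {α M : ℝ} (hα : 0 ≤ α)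
    (hM : ∀ j, |b j * (j : ℝ) ^ α| ≤ M) {k n : ℕ} (hkn : k ≤ n) :
    |b (n - k)| * (n : ℝ) ^ α ≤ ((k : ℝ) + 1) ^ α * (M + |b 0|) := by
  have hM0 : 0 ≤ M := (abs_nonneg _).trans (hM 0)
  obtain ⟨j, rfl⟩ := Nat.exists_eq_add_of_le hkn
  rw [Nat.add_sub_cancel_left]
  rcases Nat.eq_zero_or_pos j with rfl | hj
  · have : (k : ℝ) ^ α ≤ ((k : ℝ) + 1) ^ α :=
      Real.rpow_le_rpow (Nat.cast_nonneg k) (by linarith) hα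
    rw [add_zero]
    nlinarith [abs_nonneg (b 0), Real.rpow_nonneg (Nat.cast_nonneg k) α]
  · have hkj : ((k + j : ℕ) : ℝ) ≤ ((k : ℝ) + 1) * j := by
      have : (1 : ℝ) ≤ j := by exact_mod_cast hj
      push_cast; nlinarith [(Nat.cast_nonneg k : (0 : ℝ) ≤ k)]
    calc |b j| * ((k + j : ℕ) : ℝ) ^ α ≤ |b j| * (((k : ℝ) + 1) ^ α * (j : ℝ) ^ α) := by
          rw [← Real.mul_rpow (by positivity) (Nat.cast_nonneg j)]
          gcongr
      _ = ((k : ℝ) + 1) ^ α * |b j * (j : ℝ) ^ α| := by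
          rw [abs_mul, abs_of_nonneg (Real.rpow_nonneg (Nat.cast_nonneg j) α)]; ring
      _ ≤ ((k : ℝ) + 1) ^ α * (M + |b 0|) := by
          gcongr
          linarith [hM j, abs_nonneg (b 0)]

theorem tendsto_coeff_mul_mul_rpow {A B : ℝ⟦X⟧} {α β : ℝ} (hα : 0 ≤ α)
    (hA : Summable fun k : ℕ => |coeff k A| * ((k : ℝ) + 1) ^ α)
    (hB : Tendsto (fun n : ℕ => coeff n B * (n : ℝ) ^ α) atTop (nhds β)) :
    Tendsto (fun n : ℕ => coeff n (A * B) * (n : ℝ) ^ α) atTop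
      (nhds ((∑' k, coeff k A) * β)) := by
  set f : ℕ → ℕ → ℝ := fun n k =>
    if k ≤ n then coeff k A * (coeff (n - k) B * (n : ℝ) ^ α) else 0
  have hf (n : ℕ) : coeff n (A * B) * (n : ℝ) ^ α = ∑' k, f n k := by
    rw [tsum_eq_sum (s := range (n + 1)) fun k hk => if_neg (by simpa using hk), coeff_mul,
      Nat.sum_antidiagonal_eq_sum_range_succ_mk, sum_mul]
    refine sum_congr rfl fun k hk => ?_
    rw [if_pos (Nat.lt_succ_iff.1 (mem_range.1 hk)), mul_assoc]
  obtain ⟨M, hM⟩ := isBounded_iff_forall_norm_le.1 (Metric.isBounded_range_of_tendsto _ hB)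
  have hlim (k : ℕ) : Tendsto (fun n => f n k) atTop (nhds (coeff k A * β)) := by
    have hshift := ((tendsto_mul_add_rpow_of_tendsto_mul_rpow k hB).comp
      (tendsto_sub_atTop_nat k)).const_mul (coeff k A)
    refine hshift.congr' ?_
    filter_upwards [eventually_ge_atTop k] with n hn
    simp only [f, if_pos hn, Function.comp_apply, Nat.cast_sub hn, sub_add_cancel]
  have hbound (n k : ℕ) : ‖f n k‖ ≤ |coeff k A| * ((k : ℝ) + 1) ^ α * (M + |coeff 0 B|) := by
    simp only [f]
    split_ifs with hkn
    · rw [Real.norm_eq_abs, abs_mul, abs_mul,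
        abs_of_nonneg (Real.rpow_nonneg (Nat.cast_nonneg n) α), mul_assoc]
      exact mul_le_mul_of_nonneg_left (abs_mul_rpow_le_of_le hα
        (fun j => hM _ (Set.mem_range_self j)) hkn) (abs_nonneg _)
    · rw [norm_zero]
      have : 0 ≤ M := (norm_nonneg _).trans (hM _ (Set.mem_range_self 0))
      positivity
  have := tendsto_tsum_of_dominated_convergence (hA.mul_right _) hlim
    (Eventually.of_forall hbound)
  rw [tsum_mul_right] at this
  exact this.congr fun n => (hf n).symm

theorem summable_abs_mul_add_one_rpow_of_mul_pow_le {a : ℕ → ℝ} {r : ℝ} (hr : 1 < r)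
    (ha : ∀ k, |a k| * r ^ k ≤ 1) :
    Summable fun k : ℕ => |a k| * ((k : ℝ) + 1) ^ (3 / 2 : ℝ) := by
  have hq : ‖r⁻¹‖ < 1 := by
    rw [Real.norm_eq_abs, abs_inv, abs_of_pos (by linarith)]; exact inv_lt_one_of_one_lt₀ hr
  have hdom : Summable fun k : ℕ => (k : ℝ) ^ 2 * r⁻¹ ^ k * 2 + r⁻¹ ^ k * 2 :=
    ((summable_pow_mul_geometric_of_norm_lt_one 2 hq).mul_right 2).add
      ((summable_geometric_of_norm_lt_one hq).mul_right 2)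
  refine hdom.of_nonneg_of_le (fun k => by positivity) fun k => ?_
  have hak : |a k| ≤ r⁻¹ ^ k := by
    rw [inv_pow, ← one_div, le_div_iff₀ (pow_pos (by linarith) k)]; exact ha k
  have hk : ((k : ℝ) + 1) ^ (3 / 2 : ℝ) ≤ (k : ℝ) ^ 2 * 2 + 2 := by
    have : (1 : ℝ) ≤ (k : ℝ) + 1 := by linarith [(Nat.cast_nonneg k : (0 : ℝ) ≤ k)]
    calc ((k : ℝ) + 1) ^ (3 / 2 : ℝ) ≤ ((k : ℝ) + 1) ^ (2 : ℝ) :=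
          Real.rpow_le_rpow_of_exponent_le this (by norm_num)
      _ ≤ (k : ℝ) ^ 2 * 2 + 2 := by
          rw [Real.rpow_two]; nlinarith [sq_nonneg ((k : ℝ) - 1)]
  calc |a k| * ((k : ℝ) + 1) ^ (3 / 2 : ℝ) ≤ r⁻¹ ^ k * ((k : ℝ) ^ 2 * 2 + 2) :=
        mul_le_mul hak hk (by positivity) (by positivity)
    _ = (k : ℝ) ^ 2 * r⁻¹ ^ k * 2 + r⁻¹ ^ k * 2 := by ring

theorem ofNat_mul_X_ne_zero {K : Type*} [Field K] [CharZero K] (n : ℕ) [n.AtLeastTwo] :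
    (OfNat.ofNat n * X : K⟦X⟧) ≠ 0 :=
  mul_ne_zero (by rw [← map_ofNat C n]; exact (map_ne_zero_iff C C_injective).2 (NeZero.ne _))
    X_ne_zero

noncomputable def Δ₁ : ℝ⟦X⟧ := 1 - 12 * X + 22 * X ^ 2 + 4 * X ^ 3 + X ^ 4

theorem constantCoeff_Δ₁ : constantCoeff Δ₁ = 1 := by simp [Δ₁]

theorem quadratic_eq_zero_iff_sq_eq_Δ₁ (L : ℝ⟦X⟧) :
    2 * X * L ^ 2 - (1 - X) ^ 2 * L + (1 - 2 * X - X ^ 2) = 0 ↔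
      ((1 - X) ^ 2 - 4 * X * L) ^ 2 = Δ₁ := by
  have h : ((1 - X) ^ 2 - 4 * X * L) ^ 2 - Δ₁ =
      8 * X * (2 * X * L ^ 2 - (1 - X) ^ 2 * L + (1 - 2 * X - X ^ 2)) := by
    rw [Δ₁]; ring
  rw [← sub_eq_zero (a := _ ^ 2), h, mul_eq_zero, or_iff_right (ofNat_mul_X_ne_zero 8)]

theorem constantCoeff_one_sub_X_sq_sub (L : ℝ⟦X⟧) :
    constantCoeff ((1 - X) ^ 2 - 4 * X * L) = 1 := by
  simp

theorem existsUnique_quadratic_eq_zero :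
    ∃! L : ℝ⟦X⟧, 2 * X * L ^ 2 - (1 - X) ^ 2 * L + (1 - 2 * X - X ^ 2) = 0 := by
  simp_rw [quadratic_eq_zero_iff_sq_eq_Δ₁]
  obtain ⟨Q, hQ⟩ : X ∣ (1 - X) ^ 2 - sqrt Δ₁ := X_dvd_iff.2 (by simp)
  have h4 : (4 : ℝ⟦X⟧) * C 4⁻¹ = 1 := by rw [← map_ofNat C 4, ← map_mul]; norm_num
  have hsol : ((1 - X) ^ 2 - 4 * X * (C 4⁻¹ * Q)) ^ 2 = Δ₁ := by
    have : (1 - X) ^ 2 - 4 * X * (C 4⁻¹ * Q) = sqrt Δ₁ := by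
      linear_combination hQ - X * Q * h4
    rw [this, sq_sqrt constantCoeff_Δ₁]
  refine ⟨C 4⁻¹ * Q, hsol, fun L hL => ?_⟩
  have h := eq_of_sq_eq_sq (constantCoeff_one_sub_X_sq_sub L)
    (constantCoeff_one_sub_X_sq_sub _) (hL.trans hsol.symm)
  exact mul_left_cancel₀ (ofNat_mul_X_ne_zero 4) (by linear_combination -h)

theorem coeff_succ_one_sub_X_sq_sub (L : ℝ⟦X⟧) {n : ℕ} (hn : 2 ≤ n) :
    coeff (n + 1) ((1 - X) ^ 2 - 4 * X * L) = -4 * coeff n L := by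
  have h : (1 - X) ^ 2 - 4 * X * L = 1 - C 2 * X + X ^ 2 - X * (C 4 * L) := by
    rw [map_ofNat, map_ofNat]; ring
  rw [h, map_sub, map_add, map_sub, coeff_succ_X_mul, coeff_C_mul, coeff_C_mul, coeff_one,
    coeff_X, coeff_X_pow, if_neg (by omega), if_neg (by omega), if_neg (by omega)]
  ring

theorem quartic_pos_of_le {x : ℝ} (hx : x ≤ 51 / 500) :
    0 < x ^ 4 + 4 * x ^ 3 + 22 * x ^ 2 - 12 * x + 1 := by
  nlinarith [sq_nonneg (x ^ 2 + 2 * x), sq_nonneg x, sq_nonneg (x - 3 / 11),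
    mul_nonneg (sub_nonneg.2 hx) (sq_nonneg x)]

theorem exists_quartic_root_mem_Icc :
    ∃ x ∈ Set.Icc (51 / 500 : ℝ) (11 / 100), x ^ 4 + 4 * x ^ 3 + 22 * x ^ 2 - 12 * x + 1 = 0 :=
  intermediate_value_Icc' (by norm_num) (by fun_prop) ⟨by norm_num, by norm_num⟩

theorem exists_isLeast_pos_quartic_root :
    ∃ ρ, IsLeast {x : ℝ | 0 < x ∧ x ^ 4 + 4 * x ^ 3 + 22 * x ^ 2 - 12 * x + 1 = 0} ρ := by
  have hS : {x : ℝ | 0 < x ∧ x ^ 4 + 4 * x ^ 3 + 22 * x ^ 2 - 12 * x + 1 = 0}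
      = Set.Ici (51 / 500) ∩ {x | x ^ 4 + 4 * x ^ 3 + 22 * x ^ 2 - 12 * x + 1 = 0} := by
    ext x
    refine ⟨fun ⟨_, hx⟩ => ⟨le_of_not_gt fun h => (quartic_pos_of_le h.le).ne' hx, hx⟩,
      fun ⟨h, hx⟩ => ⟨lt_of_lt_of_le (by norm_num) h, hx⟩⟩
  obtain ⟨x₀, hx₀, hroot⟩ := exists_quartic_root_mem_Icc
  rw [hS]
  exact ⟨_, (isClosed_Ici.inter (isClosed_eq (by fun_prop) continuous_const)).isLeast_csInf
    ⟨x₀, hx₀.1, hroot⟩ ⟨51 / 500, fun x hx => hx.1⟩⟩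

theorem le_of_isLeast_pos_quartic_root {ρ : ℝ}
    (hρ : IsLeast {x : ℝ | 0 < x ∧ x ^ 4 + 4 * x ^ 3 + 22 * x ^ 2 - 12 * x + 1 = 0} ρ) :
    ρ ≤ 11 / 100 := by
  obtain ⟨x₀, hx₀, hroot⟩ := exists_quartic_root_mem_Icc
  exact (hρ.2 ⟨by linarith [hx₀.1], hroot⟩).trans hx₀.2

noncomputable def rescaledCubic (ρ : ℝ) : ℝ⟦X⟧ :=
  C (ρ ^ 4 + 4 * ρ ^ 3 + 22 * ρ ^ 2) * X + C (ρ ^ 4 + 4 * ρ ^ 3) * X ^ 2 + C (ρ ^ 4) * X ^ 3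

theorem rescale_Δ₁ {ρ : ℝ} (hρ : ρ ^ 4 + 4 * ρ ^ 3 + 22 * ρ ^ 2 - 12 * ρ + 1 = 0) :
    rescale ρ Δ₁ = (1 - X) * (1 - rescaledCubic ρ) := by
  have hC := congrArg C hρ
  simp only [map_add, map_sub, map_mul, map_pow, map_ofNat, map_one, map_zero] at hC
  simp only [Δ₁, rescaledCubic, map_add, map_sub, map_mul, map_pow, map_ofNat, map_one,
    rescale_X]
  linear_combination X * hC

@[simp]
theorem constantCoeff_rescaledCubic (ρ : ℝ) : constantCoeff (rescaledCubic ρ) = 0 := by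
  simp [rescaledCubic]

theorem coeff_rescaledCubic (ρ : ℝ) (n : ℕ) : coeff n (rescaledCubic ρ) =
    if n = 1 then ρ ^ 4 + 4 * ρ ^ 3 + 22 * ρ ^ 2 else if n = 2 then ρ ^ 4 + 4 * ρ ^ 3
      else if n = 3 then ρ ^ 4 else 0 := by
  rw [rescaledCubic, map_add, map_add, coeff_C_mul, coeff_C_mul, coeff_C_mul, coeff_X,
    coeff_X_pow, coeff_X_pow]
  rcases n with _ | _ | _ | _ | n <;> simp

theorem coeff_rescaledCubic_nonneg {ρ : ℝ} (hρ : 0 ≤ ρ) (n : ℕ) :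
    0 ≤ coeff n (rescaledCubic ρ) := by
  rw [coeff_rescaledCubic]
  split_ifs <;> positivity

theorem sum_coeff_rescaledCubic_mul_pow_le {ρ r : ℝ} (hρ : 0 ≤ ρ) (hr : 0 ≤ r) (N : ℕ) :
    ∑ n ∈ range N, coeff n (rescaledCubic ρ) * r ^ n ≤
      (ρ ^ 4 + 4 * ρ ^ 3 + 22 * ρ ^ 2) * r + (ρ ^ 4 + 4 * ρ ^ 3) * r ^ 2 + ρ ^ 4 * r ^ 3 := by
  have hsum : HasSum (fun n => coeff n (rescaledCubic ρ) * r ^ n)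
      (∑ n ∈ range 4, coeff n (rescaledCubic ρ) * r ^ n) :=
    hasSum_sum_of_ne_finset_zero fun n hn => by
      rw [coeff_rescaledCubic, if_neg, if_neg, if_neg, zero_mul] <;>
      · simp only [mem_range] at hn; omega
  refine (sum_le_hasSum _ (fun n _ => ?_) hsum).trans_eq ?_
  · exact mul_nonneg (coeff_rescaledCubic_nonneg hρ n) (pow_nonneg hr n)
  · simp [sum_range_succ, coeff_rescaledCubic]

theorem rescale_one_sub_X_sq_sub_eq_sqrt_mul_sqrt {L : ℝ⟦X⟧}
    (hL : ((1 - X) ^ 2 - 4 * X * L) ^ 2 = Δ₁) {ρ : ℝ}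
    (hρ : ρ ^ 4 + 4 * ρ ^ 3 + 22 * ρ ^ 2 - 12 * ρ + 1 = 0) :
    rescale ρ ((1 - X) ^ 2 - 4 * X * L) = sqrt (1 - rescaledCubic ρ) * sqrt (1 - X) := by
  refine eq_of_sq_eq_sq ?_ (by simp) ?_
  · rw [← coeff_zero_eq_constantCoeff_apply, coeff_rescale, pow_zero, one_mul,
      coeff_zero_eq_constantCoeff_apply, constantCoeff_one_sub_X_sq_sub]
  · rw [← map_pow, hL, rescale_Δ₁ hρ, mul_pow, sq_sqrt (by simp), sq_sqrt (by simp), mul_comm]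

theorem abs_coeff_sqrt_one_sub_rescaledCubic_mul_pow_le {ρ : ℝ} (hρ0 : 0 ≤ ρ)
    (hρ : ρ ≤ 11 / 100) (k : ℕ) : |coeff k (sqrt (1 - rescaledCubic ρ))| * 3 ^ k ≤ 1 := by
  refine abs_coeff_sqrt_one_sub_mul_pow_le (constantCoeff_rescaledCubic ρ)
    (coeff_rescaledCubic_nonneg hρ0) (by norm_num) (fun N => ?_) k
  refine (sum_coeff_rescaledCubic_mul_pow_le hρ0 (by norm_num) N).trans ?_
  have hρ2 : ρ ^ 2 ≤ (11 / 100) ^ 2 := pow_le_pow_left₀ hρ0 hρ 2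
  have hρ3 : ρ ^ 3 ≤ (11 / 100) ^ 3 := pow_le_pow_left₀ hρ0 hρ 3
  have hρ4 : ρ ^ 4 ≤ (11 / 100) ^ 4 := pow_le_pow_left₀ hρ0 hρ 4
  linarith

theorem half_le_tsum_coeff_sqrt_one_sub_rescaledCubic {ρ : ℝ} (hρ0 : 0 ≤ ρ)
    (hρ : ρ ≤ 11 / 100) : 1 / 2 ≤ ∑' k, coeff k (sqrt (1 - rescaledCubic ρ)) := by
  have h := one_sub_le_tsum_coeff_sqrt_one_sub (constantCoeff_rescaledCubic ρ)
    (coeff_rescaledCubic_nonneg hρ0) (s := 1 / 2) (by norm_num) fun N => by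
      have hρ2 : ρ ^ 2 ≤ (11 / 100) ^ 2 := pow_le_pow_left₀ hρ0 hρ 2
      have hρ3 : ρ ^ 3 ≤ (11 / 100) ^ 3 := pow_le_pow_left₀ hρ0 hρ 3
      have hρ4 : ρ ^ 4 ≤ (11 / 100) ^ 4 := pow_le_pow_left₀ hρ0 hρ 4
      simpa using (sum_coeff_rescaledCubic_mul_pow_le hρ0 zero_le_one N).trans
        (by linarith : _ ≤ 2 * (1 / 2 : ℝ) - (1 / 2) ^ 2)
  linarith

theorem tendsto_coeff_mul_pow_mul_rpow {L : ℝ⟦X⟧} (hL : ((1 - X) ^ 2 - 4 * X * L) ^ 2 = Δ₁)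
    {ρ : ℝ} (hρ0 : 0 < ρ) (hρ : ρ ≤ 11 / 100)
    (hroot : ρ ^ 4 + 4 * ρ ^ 3 + 22 * ρ ^ 2 - 12 * ρ + 1 = 0) :
    ∃ c, 0 < c ∧
      Tendsto (fun n : ℕ => coeff n L * ρ ^ n * (n : ℝ) ^ (3 / 2 : ℝ)) atTop (nhds c) := by
  set H := ∑' k, coeff k (sqrt (1 - rescaledCubic ρ))
  have hH : 0 < H := by linarith [half_le_tsum_coeff_sqrt_one_sub_rescaledCubic hρ0.le hρ]
  obtain ⟨c₀, hc₀, hB⟩ := exists_tendsto_coeff_sqrt_one_sub_X_mul_rpow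
  have hAB := tendsto_coeff_mul_mul_rpow (by norm_num) (summable_abs_mul_add_one_rpow_of_mul_pow_le
    (by norm_num) (abs_coeff_sqrt_one_sub_rescaledCubic_mul_pow_le hρ0.le hρ)) hB
  have hshift := ((tendsto_add_atTop_iff_nat 1).2
    (tendsto_mul_add_rpow_of_tendsto_mul_rpow (-1) hAB)).const_mul (-(4 * ρ)⁻¹)
  rw [show -(4 * ρ)⁻¹ * (H * -c₀) = H * c₀ / (4 * ρ) by field_simp] at hshift
  refine ⟨H * c₀ / (4 * ρ), by positivity, hshift.congr' ?_⟩
  filter_upwards [eventually_ge_atTop 2] with n hn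
  have hcoeff := congrArg (coeff (n + 1)) (rescale_one_sub_X_sq_sub_eq_sqrt_mul_sqrt hL hroot)
  rw [coeff_rescale, coeff_succ_one_sub_X_sq_sub L hn] at hcoeff
  rw [← hcoeff]
  push_cast
  rw [add_neg_cancel_right]
  field_simp
  ring

/-- Instance `k = 1` of Proposition 3.4 of the paper: the generating function
`L` of the subset `𝓛⁽¹⁾` of planar Eulerian orientations is the unique power
series satisfying `2t L² − (1−t)² L + (1 − 2t − t²) = 0`; letting `ρ` be the
smallest positive real root of `X⁴ + 4X³ + 22X² − 12X + 1` (which exists),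
the coefficients `ℓ_n` of `L` satisfy `ℓ_n ∼ c (1/ρ)ⁿ n^{−3/2}` for some
constant `c > 0`, i.e. `ℓ_n ρⁿ n^{3/2} → c`. -/
theorem L1_unique_and_asymptotics :
    (∃! L : PowerSeries ℝ,
      2 * X * L ^ 2 - (1 - X) ^ 2 * L + (1 - 2 * X - X ^ 2) = 0) ∧
    (∃ ρ : ℝ, (0 < ρ ∧ ρ ^ 4 + 4 * ρ ^ 3 + 22 * ρ ^ 2 - 12 * ρ + 1 = 0) ∧
      ∀ x : ℝ, 0 < x → x ^ 4 + 4 * x ^ 3 + 22 * x ^ 2 - 12 * x + 1 = 0 → ρ ≤ x) ∧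
    (∀ L : PowerSeries ℝ,
      2 * X * L ^ 2 - (1 - X) ^ 2 * L + (1 - 2 * X - X ^ 2) = 0 →
      ∀ ρ : ℝ, ((0 < ρ ∧ ρ ^ 4 + 4 * ρ ^ 3 + 22 * ρ ^ 2 - 12 * ρ + 1 = 0) ∧
          ∀ x : ℝ, 0 < x → x ^ 4 + 4 * x ^ 3 + 22 * x ^ 2 - 12 * x + 1 = 0 → ρ ≤ x) →
        ∃ c : ℝ, 0 < c ∧
          Tendsto (fun n : ℕ =>
              (PowerSeries.coeff n L) * ρ ^ n * (n : ℝ) ^ (3 / 2 : ℝ))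
            atTop (nhds c)) := by
  obtain ⟨ρ₀, hρ₀⟩ := exists_isLeast_pos_quartic_root
  refine ⟨existsUnique_quadratic_eq_zero, ⟨ρ₀, hρ₀.1, fun x hx hroot => hρ₀.2 ⟨hx, hroot⟩⟩,
    fun L hL ρ hρ => ?_⟩
  have hleast : IsLeast {x : ℝ | 0 < x ∧ x ^ 4 + 4 * x ^ 3 + 22 * x ^ 2 - 12 * x + 1 = 0} ρ :=
    ⟨hρ.1, fun x hx => hρ.2 x hx.1 hx.2⟩
  exact tendsto_coeff_mul_pow_mul_rpow ((quadratic_eq_zero_iff_sq_eq_Δ₁ L).1 hL) hρ.1.1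
    (le_of_isLeast_pos_quartic_root hleast) hρ.1.2
end
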